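/- arXiv:1612.02642 — 6 statements merged into one kernel-verified Lean document; each statement's English description precedes it below -/
import Mathlib

section
/- For any three vertices u, v, w of a tree T with edges {u,v} and {v,w}, the number of subtrees counting function satisfies 2·f_T(v) − f_T(u) − f_T(w) > 0, where f_T(x) denotes the number of subtrees of T containing x. -/
open SimpleGraph

/-- Eccentricity of a vertex: maximum distance to any vertex. -/
noncomputable def ecc {V : Type*} [Fintype V] (G : SimpleGraph V) (v : V) : ℕ :=
  Finset.univ.sup fun u => G.dist u v

/-- Center: vertices of minimum eccentricity. -/
noncomputable def center {V : Type*} [Fintype V] (G : SimpleGraph V) : Set V :=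
  {v | ∀ u, ecc G v ≤ ecc G u}

/-- Number of vertices of the component of `G - v` containing `u`; this equals the
number of edges of the corresponding branch of a tree at `v`. -/
noncomputable def branchSize {V : Type*} (G : SimpleGraph V) (v : V) (u : {x : V // x ≠ v}) : ℕ :=
  Set.ncard {x : {y : V // y ≠ v} | (G.induce {y : V | y ≠ v}).Reachable ⟨u.1, u.2⟩ ⟨x.1, x.2⟩}

/-- Weight of a vertex: maximal number of edges in a branch at `v`. -/
noncomputable def weight {V : Type*} [Fintype V] [DecidableEq V] (G : SimpleGraph V) (v : V) : ℕ :=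
  Finset.univ.sup fun u : {x : V // x ≠ v} => branchSize G v u

/-- Centroid: vertices of minimum weight. -/
noncomputable def centroid {V : Type*} [Fintype V] [DecidableEq V] (G : SimpleGraph V) : Set V :=
  {v | ∀ u, weight G v ≤ weight G u}

/-- Number of subtrees (vertex sets inducing a connected subgraph) containing all of `A`. -/
noncomputable def numSubtreesOn {V : Type*} (G : SimpleGraph V) (A : Set V) : ℕ :=
  Set.ncard {S : Set V | A ⊆ S ∧ (G.induce S).Connected}

/-- Number of subtrees containing the vertex `v`. -/
noncomputable def numSubtrees {V : Type*} (G : SimpleGraph V) (v : V) : ℕ :=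
  numSubtreesOn G {v}

/-- Subtree core: vertices maximizing the number of subtrees containing them. -/
noncomputable def subtreeCore {V : Type*} (G : SimpleGraph V) : Set V :=
  {v | ∀ u, numSubtrees G u ≤ numSubtrees G v}

/-- Distance between two sets of vertices: minimum pairwise distance. -/
noncomputable def setDist {V : Type*} (G : SimpleGraph V) (A B : Set V) : ℕ :=
  sInf {d | ∃ a ∈ A, ∃ b ∈ B, G.dist a b = d}

/-- The path-star tree `P_{n-g,g}`: a path on vertices `0, …, n-g-1` (paper labels
`1, …, n-g`) with `g` pendant vertices `n-g, …, n-1` attached to vertex `n-g-1`. -/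
def pathStar (n g : ℕ) : SimpleGraph (Fin n) :=
  SimpleGraph.fromRel fun i j =>
    (i.val + 1 = j.val ∧ j.val < n - g) ∨ (i.val = n - g - 1 ∧ n - g ≤ j.val)

/-- The tree obtained from `G` by detaching the pendant vertex `y` and attaching it
as a pendant vertex adjacent to `w`. -/
def reattach {V : Type*} (G : SimpleGraph V) (y w : V) : SimpleGraph V :=
  SimpleGraph.fromRel fun a b => (G.Adj a b ∧ a ≠ y ∧ b ≠ y) ∨ (a = y ∧ b = w)


private lemma induce_insert_connected' {V : Type} (G : SimpleGraph V) {S : Set V} {u v : V}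
    (hu : u ∈ S) (huv : G.Adj u v) (hc : (G.induce S).Connected) :
    (G.induce (insert v S)).Connected := by
  let φ : G.induce S →g G.induce (insert v S) :=
    ⟨fun x => ⟨x.1, Set.mem_insert_of_mem _ x.2⟩, fun {a b} h => h⟩
  have key : ∀ x : (insert v S : Set V),
      (G.induce (insert v S)).Reachable x ⟨u, Set.mem_insert_of_mem _ hu⟩ := by
    rintro ⟨x, hx⟩
    rcases Set.mem_insert_iff.mp hx with rfl | hxS
    · exact Adj.reachable (by exact huv.symm)
    · exact (hc.preconnected ⟨x, hxS⟩ ⟨u, hu⟩).map φ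
  have : Nonempty (insert v S : Set V) := ⟨⟨v, Set.mem_insert _ _⟩⟩
  exact ⟨fun a b => (key a).trans (key b).symm⟩

private lemma tree_mid' {V : Type} [DecidableEq V] {G : SimpleGraph V} (hT : G.IsTree) {u v w : V}
    (huv : G.Adj u v) (hvw : G.Adj v w) (huw : u ≠ w) {S : Set V}
    (hu : u ∈ S) (hw : w ∈ S) (hc : (G.induce S).Connected) : v ∈ S := by
  obtain ⟨W⟩ := hc.preconnected ⟨u, hu⟩ ⟨w, hw⟩
  let ψ : G.induce S →g G := ⟨Subtype.val, fun h => h⟩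
  let W' : G.Walk u w := W.map ψ
  have hsub : ∀ x ∈ W'.support, x ∈ S := by
    intro x hx
    rw [show W' = W.map ψ from rfl, Walk.support_map] at hx
    obtain ⟨y, _, rfl⟩ := List.mem_map.mp hx
    exact y.2
  have hpsub : ∀ x ∈ (W'.toPath : G.Walk u w).support, x ∈ S :=
    fun x hx => hsub x (Walk.support_toPath_subset W' hx)
  have hpath : (Walk.cons huv (Walk.cons hvw Walk.nil)).IsPath := by
    simp [Walk.isPath_def, huv.ne, hvw.ne, huw]
  obtain ⟨q, hq, hun⟩ := hT.existsUnique_path u w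
  have h1 : (W'.toPath : G.Walk u w) = q := hun _ W'.toPath.2
  have h2 : Walk.cons huv (Walk.cons hvw Walk.nil) = q := hun _ hpath
  apply hpsub v
  rw [h1, ← h2]
  simp

private lemma induce_singleton_connected' {V : Type} (G : SimpleGraph V) (v : V) :
    (G.induce {v}).Connected := by
  have : Nonempty ({v} : Set V) := ⟨⟨v, rfl⟩⟩
  refine ⟨fun a b => ?_⟩
  have : a = b := Subtype.ext (a.2.trans b.2.symm)
  rw [this]

private lemma ncard_lt_of_injOn_miss {α : Type} [Finite α] {A B : Set α} (f : α → α)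
    (hmaps : ∀ S ∈ A, f S ∈ B) (hinj : Set.InjOn f A) (b0 : α) (hb0 : b0 ∈ B)
    (hmiss : ∀ S ∈ A, f S ≠ b0) : A.ncard < B.ncard := by
  have h1 : A.ncard ≤ (B \ {b0}).ncard :=
    Set.ncard_le_ncard_of_injOn f (fun S hS => ⟨hmaps S hS, hmiss S hS⟩) hinj (Set.toFinite _)
  have h2 : (B \ {b0}).ncard < B.ncard := by
    refine Set.ncard_lt_ncard ⟨Set.diff_subset, fun hsub => ?_⟩ (Set.toFinite _)
    exact (hsub hb0).2 rfl
  omega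

private lemma numSubtrees_split' {V : Type} [Fintype V] (G : SimpleGraph V) (a b : V) :
    numSubtrees G a = Set.ncard {S : Set V | a ∈ S ∧ b ∈ S ∧ (G.induce S).Connected}
      + Set.ncard {S : Set V | a ∈ S ∧ b ∉ S ∧ (G.induce S).Connected} := by
  unfold numSubtrees numSubtreesOn
  have h : {S : Set V | {a} ⊆ S ∧ (G.induce S).Connected}
      = {S : Set V | a ∈ S ∧ b ∈ S ∧ (G.induce S).Connected}
        ∪ {S : Set V | a ∈ S ∧ b ∉ S ∧ (G.induce S).Connected} := by
    ext S
    simp only [Set.mem_setOf_eq, Set.mem_union, Set.singleton_subset_iff]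
    tauto
  rw [h, Set.ncard_union_eq ?_ (Set.toFinite _) (Set.toFinite _)]
  rw [Set.disjoint_left]
  rintro S ⟨-, hb, -⟩ ⟨-, hb', -⟩
  exact hb' hb

/-- The key strict inequality: subtrees containing `u` but not `v` are strictly fewer than
subtrees containing `v` but not `w`. -/
private lemma key_lt' {V : Type} [Fintype V] [DecidableEq V] {G : SimpleGraph V}
    (hT : G.IsTree) {u v w : V} (huw : u ≠ w) (huv : G.Adj u v) (hvw : G.Adj v w) :
    Set.ncard {S : Set V | u ∈ S ∧ v ∉ S ∧ (G.induce S).Connected}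
      < Set.ncard {S : Set V | v ∈ S ∧ w ∉ S ∧ (G.induce S).Connected} := by
  refine ncard_lt_of_injOn_miss (fun S => insert v S) ?_ ?_ {v} ?_ ?_
  · rintro S ⟨hu, hv, hc⟩
    refine ⟨Set.mem_insert _ _, ?_, induce_insert_connected' G hu huv hc⟩
    rintro (h | hwS)
    · exact hvw.ne' h
    · exact hv (tree_mid' hT huv hvw huw hu hwS hc)
  · rintro S1 ⟨-, hv1, -⟩ S2 ⟨-, hv2, -⟩ h
    have := congrArg (fun T => T \ ({v} : Set V)) h
    simpa [Set.insert_diff_self_of_notMem, hv1, hv2] using this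
  · exact ⟨rfl, fun h => hvw.ne' h, induce_singleton_connected' G v⟩
  · rintro S ⟨hu, -, -⟩ h
    have : u ∈ ({v} : Set V) := h ▸ Set.mem_insert_of_mem v hu
    exact huv.ne this

/-- Strict concavity of the subtree counting function: if `{u,v}` and `{v,w}` are edges of a
tree `T` (with `u, v, w` three distinct vertices), then `2 f_T(v) - f_T(u) - f_T(w) > 0`. -/
theorem numSubtrees_concave {V : Type} [Fintype V] [DecidableEq V]
    (G : SimpleGraph V) (hT : G.IsTree) (u v w : V) (huw : u ≠ w)
    (huv : G.Adj u v) (hvw : G.Adj v w) :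
    numSubtrees G u + numSubtrees G w < 2 * numSubtrees G v := by
  have e1 := numSubtrees_split' G u v
  have e2 := numSubtrees_split' G w v
  have e3 := numSubtrees_split' G v u
  have e4 := numSubtrees_split' G v w
  have i1 := key_lt' hT huw huv hvw
  have i2 := key_lt' hT huw.symm hvw.symm huv.symm
  have c1 : {S : Set V | u ∈ S ∧ v ∈ S ∧ (G.induce S).Connected}
      = {S : Set V | v ∈ S ∧ u ∈ S ∧ (G.induce S).Connected} := by
    ext S; simp only [Set.mem_setOf_eq]; tauto
  have c2 : {S : Set V | w ∈ S ∧ v ∈ S ∧ (G.induce S).Connected}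
      = {S : Set V | v ∈ S ∧ w ∈ S ∧ (G.induce S).Connected} := by
    ext S; simp only [Set.mem_setOf_eq]; tauto
  rw [c1] at e1
  rw [c2] at e2
  omega
end

section
/- The subtree core of a tree consists of either one vertex or two adjacent vertices. -/
open SimpleGraph

/-! Write `f = numSubtrees G`. For a path `a - b - c` in a tree, `S ↦ insert b S` injects the
subtrees containing `a` but not `b` into those containing `b` but not `c`, missing `{b}`. Splitting
`f a` and `f b` by whether the subtree also contains the neighbour on the path then gives
`f a + f c < 2 * f b`: `f` is strictly concave along paths. Hence any two maximizers of `f` are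
adjacent, and since a tree has no triangles the core has one or two vertices. -/

namespace SimpleGraph

variable {V : Type} {G : SimpleGraph V}

lemma induce_singleton_connected (v : V) : (G.induce {v}).Connected := by
  rw [induce_singleton_eq_top]
  exact connected_top

lemma Connected.induce_insert {S : Set V} {a b : V} (hS : (G.induce S).Connected)
    (ha : a ∈ S) (hab : G.Adj a b) : (G.induce (insert b S)).Connected := by
  rw [← Set.union_singleton]
  exact connected_induce_union hS.preconnected (induce_singleton_connected b).preconnected
    ha rfl hab

lemma IsAcyclic.notMem_of_induce_connected (hG : G.IsAcyclic) {a b c : V} (hab : G.Adj a b)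
    (hbc : G.Adj b c) (hac : a ≠ c) {S : Set V} (hS : (G.induce S).Connected)
    (ha : a ∈ S) (hb : b ∉ S) : c ∉ S := by
  classical
  intro hc
  obtain ⟨w⟩ := hS.preconnected ⟨a, ha⟩ ⟨c, hc⟩
  obtain ⟨W, hbW⟩ : ∃ W : G.Walk a c, b ∉ W.support := by
    refine ⟨w.map (Embedding.induce S).toHom, fun hmem => ?_⟩
    have : b ∈ w.support.map Subtype.val := Walk.support_map (Embedding.induce S).toHom w ▸ hmem
    obtain ⟨x, -, rfl⟩ := List.mem_map.mp this
    exact hb x.2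
  have hpath : (Walk.cons hab (Walk.cons hbc Walk.nil)).IsPath := by
    simp [Walk.cons_isPath_iff, hab.ne, hbc.ne, hac]
  -- a walk from `a` to `c` avoiding `b` would yield a second path besides `a - b - c`
  have huniq := (hG.subsingleton_path a c).elim W.toPath ⟨_, hpath⟩
  apply hbW
  apply W.support_toPath_subset_support
  rw [huniq]
  simp

noncomputable def numSubtreesExcluding (G : SimpleGraph V) (a b : V) : ℕ :=
  Set.ncard {S : Set V | a ∈ S ∧ b ∉ S ∧ (G.induce S).Connected}

lemma numSubtrees_eq_add [Finite V] (a b : V) :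
    numSubtrees G a = numSubtreesOn G {a, b} + numSubtreesExcluding G a b := by
  rw [numSubtrees, numSubtreesOn, numSubtreesOn, numSubtreesExcluding,
    ← Set.ncard_union_eq ?_ (Set.toFinite _) (Set.toFinite _)]
  · congr 1
    ext S
    by_cases hb : b ∈ S <;> simp [Set.insert_subset_iff, hb]
  · rw [Set.disjoint_left]
    rintro S ⟨hS, -⟩ ⟨-, hbS, -⟩
    exact hbS (hS (by simp))

lemma IsAcyclic.numSubtreesExcluding_lt [Finite V] (hG : G.IsAcyclic) {a b c : V}
    (hab : G.Adj a b) (hbc : G.Adj b c) (hac : a ≠ c) :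
    numSubtreesExcluding G a b < numSubtreesExcluding G b c := by
  have hmaps : Set.MapsTo (insert b) {S : Set V | a ∈ S ∧ b ∉ S ∧ (G.induce S).Connected}
      {S | b ∈ S ∧ c ∉ S ∧ (G.induce S).Connected} := by
    rintro S ⟨haS, hbS, hS⟩
    have hcS := hG.notMem_of_induce_connected hab hbc hac hS haS hbS
    exact ⟨Set.mem_insert b S, by simp [hbc.ne', hcS], hS.induce_insert haS hab⟩
  have hinj : Set.InjOn (insert b) {S : Set V | a ∈ S ∧ b ∉ S ∧ (G.induce S).Connected} := by
    rintro S ⟨-, hbS, -⟩ T ⟨-, hbT, -⟩ hST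
    rw [← Set.insert_sdiff_self_of_notMem hbS, ← Set.insert_sdiff_self_of_notMem hbT, hST]
  have hb : ({b} : Set V) ∉ insert b '' {S : Set V | a ∈ S ∧ b ∉ S ∧ (G.induce S).Connected} := by
    rintro ⟨S, ⟨haS, -, -⟩, hS⟩
    exact hab.ne (Set.mem_singleton_iff.mp (hS ▸ Set.mem_insert_of_mem b haS))
  rw [numSubtreesExcluding, ← hinj.ncard_image]
  refine Set.ncard_lt_ncard ⟨hmaps.image_subset, fun h => hb (h ?_)⟩ (Set.toFinite _)
  exact ⟨rfl, by simp [hbc.ne'], induce_singleton_connected b⟩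

lemma IsAcyclic.numSubtrees_add_lt [Finite V] (hG : G.IsAcyclic) {a b c : V}
    (hab : G.Adj a b) (hbc : G.Adj b c) (hac : a ≠ c) :
    numSubtrees G a + numSubtrees G c < 2 * numSubtrees G b := by
  have ha := numSubtrees_eq_add (G := G) a b
  have hc := numSubtrees_eq_add (G := G) c b
  have hba := numSubtrees_eq_add (G := G) b a
  have hbc' := numSubtrees_eq_add (G := G) b c
  have hlt := hG.numSubtreesExcluding_lt hab hbc hac
  have hlt' := hG.numSubtreesExcluding_lt hbc.symm hab.symm hac.symm
  rw [Set.pair_comm] at ha hc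
  omega

lemma IsAcyclic.numSubtrees_lt_of_isPath [Finite V] (hG : G.IsAcyclic) {a b v : V}
    (hab : G.Adj a b) (q : G.Walk b v) (hp : (q.cons hab).IsPath) (hq : ¬ q.Nil)
    (hle : numSubtrees G b ≤ numSubtrees G a) : numSubtrees G v < numSubtrees G b := by
  induction q generalizing a with
  | nil => exact absurd Walk.Nil.nil hq
  | @cons b c v hbc q ih =>
    have hac : a ≠ c := by
      rintro rfl
      exact ((Walk.cons_isPath_iff hab _).mp hp).2 (by simp)
    have hcb : numSubtrees G c < numSubtrees G b := by
      have := hG.numSubtrees_add_lt hab hbc hac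
      omega
    by_cases hnil : q.Nil
    · exact hnil.eq ▸ hcb
    · exact (ih hbc hp.of_cons hnil hcb.le).trans hcb

lemma IsTree.isClique_subtreeCore [Finite V] (hG : G.IsTree) : G.IsClique (subtreeCore G) := by
  classical
  intro x hx y hy hxy
  by_contra hadj
  obtain ⟨w⟩ := hG.connected.preconnected x y
  obtain ⟨p, hp⟩ := w.toPath
  cases p with
  | nil => exact hxy rfl
  | cons hxb q =>
    have hq : ¬ q.Nil := fun hnil => hadj (hnil.eq ▸ hxb)
    have hyb := hG.isAcyclic.numSubtrees_lt_of_isPath hxb q hp hq (hx _)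
    exact (hyb.trans_le (hx _)).not_ge (hy x)

lemma subtreeCore_nonempty [Finite V] [Nonempty V] : (subtreeCore G).Nonempty :=
  Finite.exists_max (numSubtrees G)

lemma IsClique.eq_singleton_or_eq_pair (hG : G.CliqueFree 3) {s : Set V} (hs : G.IsClique s)
    (hne : s.Nonempty) : (∃ v, s = {v}) ∨ ∃ u v, G.Adj u v ∧ s = {u, v} := by
  classical
  obtain hsingle | ⟨u, hu, v, hv, huv⟩ := hne.exists_eq_singleton_or_nontrivial
  · exact Or.inl hsingle
  refine Or.inr ⟨u, v, hs hu hv huv, Set.Subset.antisymm (fun w hw => ?_) ?_⟩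
  · by_contra hw'
    simp only [Set.mem_insert_iff, Set.mem_singleton_iff, not_or] at hw'
    exact hG {w, u, v} (is3Clique_triple_iff.mpr
      ⟨hs hw hu hw'.1, hs hw hv hw'.2, hs hu hv huv⟩)
  · exact Set.insert_subset hu (Set.singleton_subset_iff.mpr hv)

end SimpleGraph

theorem subtreeCore_one_or_two_adjacent_general {V : Type} [Fintype V]
    (G : SimpleGraph V) (hT : G.IsTree) :
    (∃ v : V, subtreeCore G = {v}) ∨ ∃ u v : V, G.Adj u v ∧ subtreeCore G = {u, v} :=
  have := hT.connected.nonempty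
  hT.isClique_subtreeCore.eq_singleton_or_eq_pair (hT.isAcyclic.cliqueFree le_rfl)
    subtreeCore_nonempty

/-- The subtree core of a tree consists of either one vertex or two adjacent vertices. -/
theorem subtreeCore_one_or_two_adjacent {V : Type} [Fintype V] [DecidableEq V]
    (G : SimpleGraph V) (hT : G.IsTree) :
    (∃ v : V, subtreeCore G = {v}) ∨ ∃ u v : V, G.Adj u v ∧ subtreeCore G = {u, v} :=
  subtreeCore_one_or_two_adjacent_general G hT
end

section
/- Let T be a tree, w a vertex and y a pendant vertex of T not adjacent to w. Let T~ be the tree obtained by detaching y from T and attaching it as a pendant vertex adjacent to w. Then for any vertex a of T other than y, f_{T~}(a) = f_T(a) − f_T(a,y) + f_T(a,w) − f_T(a,w,y). -/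
open SimpleGraph

section Aux

set_option linter.unusedSectionVars false

variable {V : Type} [Fintype V] [DecidableEq V]

lemma reattach_adj_iff (G : SimpleGraph V) (y w : V) {a b : V} (hay : a ≠ y) (hby : b ≠ y) :
    (SimpleGraph.fromRel (fun a b => (G.Adj a b ∧ a ≠ y ∧ b ≠ y) ∨ (a = y ∧ b = w))).Adj a b
      ↔ G.Adj a b := by
  rw [SimpleGraph.fromRel_adj]
  constructor
  · rintro ⟨hab, (⟨h, _⟩ | ⟨h, _⟩) | (⟨h, _⟩ | ⟨h, _⟩)⟩
    · exact h
    · exact absurd h hay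
    · exact h.symm
    · exact absurd h hby
  · intro h
    exact ⟨h.ne, Or.inl (Or.inl ⟨h, hay, hby⟩)⟩

lemma induce_reattach_eq (G : SimpleGraph V) (y w : V) (S : Set V) (hyS : y ∉ S) :
    (SimpleGraph.fromRel (fun a b => (G.Adj a b ∧ a ≠ y ∧ b ≠ y) ∨ (a = y ∧ b = w))).induce S
      = G.induce S := by
  ext ⟨u, hu⟩ ⟨v, hv⟩
  exact reattach_adj_iff G y w (fun h => hyS (h ▸ hu)) (fun h => hyS (h ▸ hv))

lemma reattach_adj_y (G : SimpleGraph V) (y w : V) (hne : w ≠ y) (b : V) :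
    (SimpleGraph.fromRel (fun a b => (G.Adj a b ∧ a ≠ y ∧ b ≠ y) ∨ (a = y ∧ b = w))).Adj y b
      ↔ b = w := by
  rw [SimpleGraph.fromRel_adj]
  constructor
  · rintro ⟨hyb, (⟨_, h, _⟩ | ⟨_, h⟩) | (⟨_, _, h⟩ | ⟨h, _⟩)⟩
    · exact absurd rfl h
    · exact h
    · exact absurd rfl h
    · exact absurd h.symm hyb
  · rintro rfl
    exact ⟨Ne.symm hne, Or.inl (Or.inr ⟨rfl, rfl⟩)⟩

/-- Removing a vertex all of whose neighbours equal `w` keeps connectivity. -/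
lemma pendant_remove (H : SimpleGraph V) (v w : V) (hv : ∀ b, H.Adj v b → b = w)
    (hwv : w ≠ v) (S : Set V) (hw : w ∈ S)
    (hconn : (H.induce S).Connected) :
    (H.induce (S \ {v})).Connected := by
  classical
  set f : ↥S → ↥(S \ {v}) := fun u =>
    if h : u.1 = v then ⟨w, hw, hwv⟩ else ⟨u.1, u.2, h⟩ with hf
  have key : ∀ {u u' : ↥S} (p : (H.induce S).Walk u u'),
      (H.induce (S \ {v})).Reachable (f u) (f u') := by
    intro u u' p
    induction p with
    | nil => exact Reachable.refl _
    | @cons x b u' h q ih =>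
      refine Reachable.trans ?_ ih
      have hadj : H.Adj x.1 b.1 := h
      by_cases hxv : x.1 = v
      · have hb : b.1 = w := hv _ (hxv ▸ hadj)
        have hbv : b.1 ≠ v := hb ▸ hwv
        have : f x = f b := by
          simp only [hf, dif_pos hxv, dif_neg hbv]
          exact Subtype.ext hb.symm
        rw [this]
      · by_cases hbv : b.1 = v
        · have hx : x.1 = w := hv _ ((hbv ▸ hadj).symm)
          have : f x = f b := by
            simp only [hf, dif_neg hxv, dif_pos hbv]
            exact Subtype.ext hx
          rw [this]
        · refine Adj.reachable ?_
          simp only [hf, dif_neg hxv, dif_neg hbv]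
          exact hadj
  rw [connected_iff]
  refine ⟨?_, ⟨⟨w, hw, hwv⟩⟩⟩
  rintro ⟨x, hxS, hxv⟩ ⟨z, hzS, hzv⟩
  have hxne : x ≠ v := fun h => hxv h
  have hzne : z ≠ v := fun h => hzv h
  obtain ⟨p⟩ := hconn.preconnected ⟨x, hxS⟩ ⟨z, hzS⟩
  have := key p
  have hx' : f ⟨x, hxS⟩ = ⟨x, hxS, hxv⟩ := by
    simp only [hf, dif_neg hxne]
  have hz' : f ⟨z, hzS⟩ = ⟨z, hzS, hzv⟩ := by
    simp only [hf, dif_neg hzne]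
  rwa [hx', hz'] at this

/-- Adding the pendant y at w keeps connectivity. -/
lemma pendant_add (G : SimpleGraph V) (y w : V) (hne : w ≠ y) (S : Set V)
    (hw : w ∈ S) (hyS : y ∉ S) (hconn : (G.induce S).Connected) :
    ((SimpleGraph.fromRel (fun a b => (G.Adj a b ∧ a ≠ y ∧ b ≠ y) ∨ (a = y ∧ b = w))).induce
      (S ∪ {y})).Connected := by
  set H := SimpleGraph.fromRel
    (fun a b => (G.Adj a b ∧ a ≠ y ∧ b ≠ y) ∨ (a = y ∧ b = w)) with hH
  have hyw : H.Adj y w := (reattach_adj_y G y w hne w).mpr rfl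
  have hmap : ∀ {u v : ↥S}, (G.induce S).Adj u v →
      (H.induce (S ∪ {y})).Adj ⟨u.1, Or.inl u.2⟩ ⟨v.1, Or.inl v.2⟩ := by
    rintro ⟨u, hu⟩ ⟨v, hv⟩ h
    have h' : G.Adj u v := h
    exact (reattach_adj_iff G y w (fun hh => hyS (hh ▸ hu)) (fun hh => hyS (hh ▸ hv))).mpr h'
  have hreach : ∀ x : ↥(S ∪ {y}), (H.induce (S ∪ {y})).Reachable x ⟨w, Or.inl hw⟩ := by
    rintro ⟨x, hx | hx⟩
    · obtain ⟨p⟩ := hconn.preconnected ⟨x, hx⟩ ⟨w, hw⟩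
      let φ : G.induce S →g H.induce (S ∪ {y}) := ⟨fun u => ⟨u.1, Or.inl u.2⟩, hmap⟩
      exact ⟨p.map φ⟩
    · simp only [Set.mem_singleton_iff] at hx
      subst hx
      refine Adj.reachable ?_
      exact hyw
  rw [connected_iff]
  exact ⟨fun x z => (hreach x).trans (hreach z).symm, ⟨⟨w, Or.inl hw⟩⟩⟩

lemma ncard_split (𝒜 ℬ 𝒞 : Set (Set V)) (h : ∀ S, S ∈ 𝒜 ↔ (S ∈ ℬ ∨ S ∈ 𝒞))
    (hd : ∀ S, S ∈ ℬ → S ∈ 𝒞 → False) : 𝒜.ncard = ℬ.ncard + 𝒞.ncard := by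
  have hu : 𝒜 = ℬ ∪ 𝒞 := Set.ext fun S => (h S).trans Iff.rfl
  rw [hu]
  exact Set.ncard_union_eq (Set.disjoint_left.mpr fun {S} hb hc => hd S hb hc)
    (Set.toFinite _) (Set.toFinite _)

end Aux
/-- Detaching a pendant vertex `y` (not adjacent to `w`) and reattaching it at `w`:
for any vertex `a ≠ y`, `f_{T~}(a) = f_T(a) - f_T(a,y) + f_T(a,w) - f_T(a,w,y)`
(stated additively to avoid truncated subtraction). -/
theorem numSubtrees_reattach {V : Type} [Fintype V] [DecidableEq V]
    (G : SimpleGraph V) [DecidableRel G.Adj] (hT : G.IsTree)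
    (w y : V) (hy : G.degree y = 1) (hne : w ≠ y) (hnadj : ¬ G.Adj w y)
    (a : V) (ha : a ≠ y) :
    numSubtrees (reattach G y w) a + numSubtreesOn G {a, y} + numSubtreesOn G {a, w, y}
      = numSubtrees G a + numSubtreesOn G {a, w} := by
  classical
  set H := reattach G y w with hHdef
  have hH : H = SimpleGraph.fromRel
      (fun a b => (G.Adj a b ∧ a ≠ y ∧ b ≠ y) ∨ (a = y ∧ b = w)) := hHdef
  set An : Set (Set V) := {S | (a ∈ S ∧ y ∉ S) ∧ (G.induce S).Connected} with hAn
  set B : Set (Set V) := {S | (a ∈ S ∧ w ∈ S ∧ y ∉ S) ∧ (G.induce S).Connected} with hB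
  set Ay : Set (Set V) := {S | (a ∈ S ∧ y ∈ S) ∧ (H.induce S).Connected} with hAy
  set Gy : Set (Set V) := {S | (a ∈ S ∧ y ∈ S) ∧ (G.induce S).Connected} with hGy
  set Gwy : Set (Set V) := {S | (a ∈ S ∧ w ∈ S ∧ y ∈ S) ∧ (G.induce S).Connected} with hGwy
  -- transfer of connectivity when y ∉ S
  have htrans : ∀ S : Set V, y ∉ S → ((H.induce S).Connected ↔ (G.induce S).Connected) := by
    intro S hyS
    rw [hH, induce_reattach_eq G y w S hyS]
  have e1 : numSubtrees H a = Ay.ncard + An.ncard := by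
    rw [numSubtrees, numSubtreesOn]
    refine ncard_split _ Ay An (fun S => ?_) (fun S h1 h2 => h2.1.2 h1.1.2)
    simp only [Set.mem_setOf_eq, Set.singleton_subset_iff, hAy, hAn]
    constructor
    · rintro ⟨haS, hc⟩
      by_cases hyS : y ∈ S
      · exact Or.inl ⟨⟨haS, hyS⟩, hc⟩
      · exact Or.inr ⟨⟨haS, hyS⟩, (htrans S hyS).mp hc⟩
    · rintro (⟨⟨haS, _⟩, hc⟩ | ⟨⟨haS, hyS⟩, hc⟩)
      · exact ⟨haS, hc⟩
      · exact ⟨haS, (htrans S hyS).mpr hc⟩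
  have e2 : numSubtrees G a = Gy.ncard + An.ncard := by
    rw [numSubtrees, numSubtreesOn]
    refine ncard_split _ Gy An (fun S => ?_) (fun S h1 h2 => h2.1.2 h1.1.2)
    simp only [Set.mem_setOf_eq, Set.singleton_subset_iff, hGy, hAn]
    constructor
    · rintro ⟨haS, hc⟩
      by_cases hyS : y ∈ S
      · exact Or.inl ⟨⟨haS, hyS⟩, hc⟩
      · exact Or.inr ⟨⟨haS, hyS⟩, hc⟩
    · rintro (⟨⟨haS, _⟩, hc⟩ | ⟨⟨haS, _⟩, hc⟩) <;> exact ⟨haS, hc⟩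
  have e3 : numSubtreesOn G {a, w} = Gwy.ncard + B.ncard := by
    rw [numSubtreesOn]
    refine ncard_split _ Gwy B (fun S => ?_) (fun S h1 h2 => h2.1.2.2 h1.1.2.2)
    simp only [Set.mem_setOf_eq, Set.insert_subset_iff, Set.singleton_subset_iff, hGwy, hB]
    constructor
    · rintro ⟨⟨haS, hwS⟩, hc⟩
      by_cases hyS : y ∈ S
      · exact Or.inl ⟨⟨haS, hwS, hyS⟩, hc⟩
      · exact Or.inr ⟨⟨haS, hwS, hyS⟩, hc⟩
    · rintro (⟨⟨haS, hwS, _⟩, hc⟩ | ⟨⟨haS, hwS, _⟩, hc⟩) <;> exact ⟨⟨haS, hwS⟩, hc⟩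
  have e4 : numSubtreesOn G {a, y} = Gy.ncard := by
    rw [numSubtreesOn]
    congr 1
    ext S
    simp only [Set.mem_setOf_eq, Set.insert_subset_iff, Set.singleton_subset_iff, hGy]
  have e5 : numSubtreesOn G {a, w, y} = Gwy.ncard := by
    rw [numSubtreesOn]
    congr 1
    ext S
    simp only [Set.mem_setOf_eq, Set.insert_subset_iff, Set.singleton_subset_iff, hGwy]
  have hvnb : ∀ b, H.Adj y b → b = w := by
    intro b h
    exact (reattach_adj_y G y w hne b).mp (hH ▸ h)
  have himg : (fun S => S \ {y}) '' Ay = B := by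
    ext S'
    constructor
    · rintro ⟨S, ⟨⟨haS, hyS⟩, hc⟩, rfl⟩
      obtain ⟨p⟩ := hc.preconnected ⟨y, hyS⟩ ⟨a, haS⟩
      have hpn : ¬ p.Nil := SimpleGraph.Walk.not_nil_of_ne
        (fun h => ha ((congrArg Subtype.val h).symm))
      have hadj : (H.induce S).Adj ⟨y, hyS⟩ (p.getVert 1) := p.adj_snd hpn
      have hadj' : H.Adj y (p.getVert 1).1 := hadj
      have hwS : w ∈ S := (hvnb _ hadj') ▸ (p.getVert 1).2
      have hc' : (H.induce (S \ {y})).Connected :=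
        pendant_remove H y w hvnb hne S hwS hc
      have hyS' : y ∉ S \ {y} := fun h => h.2 rfl
      exact ⟨⟨⟨haS, ha⟩, ⟨hwS, hne⟩, hyS'⟩, (htrans _ hyS').mp hc'⟩
    · rintro ⟨⟨haS, hwS, hyS⟩, hc⟩
      refine ⟨S' ∪ {y}, ⟨⟨Or.inl haS, Or.inr rfl⟩, ?_⟩, ?_⟩
      · rw [hH]
        exact pendant_add G y w hne S' hwS hyS hc
      · ext x
        constructor
        · rintro ⟨hx | hx, hxy⟩
          · exact hx
          · exact absurd hx hxy
        · intro hx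
          exact ⟨Or.inl hx, fun h => hyS (h ▸ hx)⟩
  have hinj : Set.InjOn (fun S => S \ {y}) Ay := by
    rintro S1 h1 S2 h2 heq
    have heq' : S1 \ {y} = S2 \ {y} := heq
    ext x
    by_cases hxy : x = y
    · subst hxy
      simp [h1.1.2, h2.1.2]
    · constructor
      · intro hx
        have : x ∈ S1 \ {y} := ⟨hx, hxy⟩
        rw [heq'] at this
        exact this.1
      · intro hx
        have : x ∈ S2 \ {y} := ⟨hx, hxy⟩
        rw [← heq'] at this
        exact this.1
  have e6 : Ay.ncard = B.ncard := by
    rw [← himg, Set.ncard_image_of_injOn hinj]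
  rw [e1, e2, e3, e4, e5, e6]
  omega
end

section
/- Let T be a tree, v a vertex in the subtree core of T, and y a pendant vertex of T not adjacent to v. If T~ is the tree obtained by detaching y from T and adding it as a pendant vertex adjacent to v, then the subtree core of T~ is exactly {v}. -/
open SimpleGraph

section Helpers
open SimpleGraph

private noncomputable def nc1 {V : Type} (G : SimpleGraph V) (y u : V) : ℕ :=
  Set.ncard {S : Set V | u ∈ S ∧ y ∉ S ∧ (G.induce S).Connected}

private noncomputable def nc2 {V : Type} (G : SimpleGraph V) (y u w : V) : ℕ :=
  Set.ncard {S : Set V | u ∈ S ∧ w ∈ S ∧ y ∉ S ∧ (G.induce S).Connected}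

private lemma singleton_connected' {V : Type} (G : SimpleGraph V) (a : V) :
    (G.induce {a}).Connected := by
  rw [connected_iff]
  refine ⟨fun u w => ?_, ⟨⟨a, rfl⟩⟩⟩
  have : u = w := Subtype.ext (u.2.trans w.2.symm)
  exact this ▸ Reachable.refl _

private lemma pair_connected' {V : Type} {G : SimpleGraph V} {a b : V} (h : G.Adj a b) :
    (G.induce {a, b}).Connected := by
  rw [connected_iff]
  refine ⟨fun u w => ?_, ⟨⟨a, by simp⟩⟩⟩
  have key : ∀ z : ({a, b} : Set V), (G.induce {a, b}).Reachable z ⟨a, by simp⟩ := by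
    rintro ⟨z, hz⟩
    rcases hz with rfl | rfl
    · exact Reachable.refl _
    · exact Adj.reachable (by simpa using h.symm)
  exact (key u).trans (key w).symm

private lemma reach_mono' {V : Type} {G : SimpleGraph V} {S T : Set V} (hST : S ⊆ T)
    {a b : ↥S} (h : (G.induce S).Reachable a b) :
    (G.induce T).Reachable ⟨a, hST a.2⟩ ⟨b, hST b.2⟩ := by
  let f : G.induce S →g G.induce T :=
    ⟨fun x => ⟨x.1, hST x.2⟩, fun {p q} hadj => hadj⟩
  exact h.map f

private lemma walk_avoid' {V : Type} {G : SimpleGraph V} {y w : V}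
    (hnbr : ∀ b, G.Adj y b → b = w) {S : Set V} {b : ↥S} (hb : (b : V) ≠ y) :
    ∀ (n : ℕ) (a : ↥S) (ha : (a : V) ≠ y) (p : (G.induce S).Walk a b), p.length = n →
      (G.induce (S \ {y})).Reachable ⟨a, a.2, ha⟩ ⟨b, b.2, hb⟩ := by
  intro n
  induction n using Nat.strong_induction_on with
  | _ n ih =>
    intro a ha p hn
    cases p with
    | nil => exact Reachable.refl _
    | @cons _ c _ h q =>
      by_cases hc : (c : V) = y
      · have haw : (a : V) = w := hnbr _ (by rw [← hc]; exact (h : G.Adj a c).symm)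
        cases q with
        | nil => exact absurd hc hb
        | @cons _ d _ h2 q2 =>
          have hdw : (d : V) = w := hnbr _ (by rw [← hc]; exact (h2 : G.Adj c d))
          have had : a = d := Subtype.ext (haw.trans hdw.symm)
          subst had
          exact ih q2.length (by simp only [Walk.length_cons] at hn; omega) a ha q2 rfl
      · have step : (G.induce (S \ {y})).Adj ⟨a, a.2, ha⟩ ⟨c, c.2, hc⟩ := h
        exact (step.reachable).trans
          (ih q.length (by simp only [Walk.length_cons] at hn; omega) c hc q rfl)

private lemma pendant_connected_iff' {V : Type} {G : SimpleGraph V} {y w : V}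
    (hadj : G.Adj y w) (hnbr : ∀ b, G.Adj y b → b = w) {S : Set V} (hyS : y ∈ S) :
    (G.induce S).Connected ↔ S = {y} ∨ (w ∈ S ∧ (G.induce (S \ {y})).Connected) := by
  have hwy : w ≠ y := fun h => G.irrefl (h ▸ hadj)
  constructor
  · intro hconn
    by_cases hS : S = {y}
    · exact Or.inl hS
    · refine Or.inr ?_
      have hz : ∃ z ∈ S, z ≠ y := by
        by_contra hcon
        push_neg at hcon
        exact hS (Set.eq_singleton_iff_unique_mem.mpr ⟨hyS, hcon⟩)
      obtain ⟨z, hzS, hzy⟩ := hz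
      have hwS : w ∈ S := by
        obtain ⟨p⟩ := hconn.preconnected ⟨y, hyS⟩ ⟨z, hzS⟩
        cases p with
        | nil => exact absurd rfl hzy
        | @cons _ c _ h q =>
          have : (c : V) = w := hnbr _ (h : G.Adj y c)
          exact this ▸ c.2
      refine ⟨hwS, ?_⟩
      rw [connected_iff]
      refine ⟨fun u u' => ?_, ⟨⟨w, hwS, hwy⟩⟩⟩
      obtain ⟨p⟩ := hconn.preconnected ⟨u.1, u.2.1⟩ ⟨u'.1, u'.2.1⟩
      have := walk_avoid' hnbr (by exact u'.2.2) p.length ⟨u.1, u.2.1⟩ (by exact u.2.2) p rfl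
      convert this
  · rintro (rfl | ⟨hwS, hconn⟩)
    · exact singleton_connected' G y
    · rw [connected_iff]
      refine ⟨fun u u' => ?_, ⟨⟨y, hyS⟩⟩⟩
      have key : ∀ z : ↥S, (G.induce S).Reachable z ⟨w, hwS⟩ := by
        rintro ⟨z, hz⟩
        by_cases hzy : z = y
        · subst hzy
          exact Adj.reachable (by exact hadj)
        · have := reach_mono' (Set.diff_subset) (hconn.preconnected ⟨z, hz, hzy⟩ ⟨w, hwS, hwy⟩)
          convert this
      exact (key u).trans (key u').symm

private lemma diff_inj' {V : Type} {y : V} {S1 S2 : Set V} (h1 : y ∈ S1) (h2 : y ∈ S2)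
    (h : S1 \ {y} = S2 \ {y}) : S1 = S2 := by
  ext z
  by_cases hz : z = y
  · subst hz; exact iff_of_true h1 h2
  · constructor
    · intro hzS
      have : z ∈ S1 \ {y} := ⟨hzS, hz⟩
      rw [h] at this; exact this.1
    · intro hzS
      have : z ∈ S2 \ {y} := ⟨hzS, hz⟩
      rw [← h] at this; exact this.1

private lemma count_pendant' {V : Type} [Finite V] {H G : SimpleGraph V} {y w : V}
    (h1 : ∀ S : Set V, y ∉ S → ((H.induce S).Connected ↔ (G.induce S).Connected))
    (hadj : H.Adj y w) (hnbr : ∀ b, H.Adj y b → b = w) {u : V} (hu : u ≠ y) :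
    numSubtrees H u =
      Set.ncard {S : Set V | u ∈ S ∧ y ∉ S ∧ (G.induce S).Connected}
      + Set.ncard {S : Set V | u ∈ S ∧ w ∈ S ∧ y ∉ S ∧ (G.induce S).Connected} := by
  have hwy : w ≠ y := fun h => H.irrefl (h ▸ hadj)
  have base : {S : Set V | {u} ⊆ S ∧ (H.induce S).Connected} =
      {S : Set V | u ∈ S ∧ y ∉ S ∧ (G.induce S).Connected} ∪
      {S : Set V | u ∈ S ∧ y ∈ S ∧ (H.induce S).Connected} := by
    ext S
    simp only [Set.mem_setOf_eq, Set.mem_union, Set.singleton_subset_iff]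
    by_cases hyS : y ∈ S
    · simp [hyS]
    · simp [hyS, h1 S hyS]
  have hdisj : Disjoint {S : Set V | u ∈ S ∧ y ∉ S ∧ (G.induce S).Connected}
      {S : Set V | u ∈ S ∧ y ∈ S ∧ (H.induce S).Connected} := by
    rw [Set.disjoint_left]
    rintro S ⟨-, h2, -⟩ ⟨-, h3, -⟩
    exact h2 h3
  have himg : (fun S : Set V => S \ {y}) '' {S : Set V | u ∈ S ∧ y ∈ S ∧ (H.induce S).Connected}
      = {S : Set V | u ∈ S ∧ w ∈ S ∧ y ∉ S ∧ (G.induce S).Connected} := by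
    ext T
    simp only [Set.mem_image, Set.mem_setOf_eq]
    constructor
    · rintro ⟨S, ⟨huS, hyS, hconn⟩, rfl⟩
      rcases (pendant_connected_iff' hadj hnbr hyS).mp hconn with hS | ⟨hwS, hconn'⟩
      · exact absurd (by rw [hS] at huS; exact huS) hu
      · refine ⟨⟨huS, hu⟩, ⟨hwS, hwy⟩, (by simp), ?_⟩
        exact (h1 _ (by simp)).mp hconn'
    · rintro ⟨huT, hwT, hyT, hconn⟩
      refine ⟨T ∪ {y}, ⟨Or.inl huT, Or.inr rfl, ?_⟩, ?_⟩
      · rw [pendant_connected_iff' hadj hnbr (Or.inr rfl)]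
        refine Or.inr ⟨Or.inl hwT, ?_⟩
        have hTe : (T ∪ {y}) \ {y} = T := by
          ext z; by_cases hz : z = y <;> simp [hz, hyT]
        rw [hTe, h1 T hyT]
        exact hconn
      · ext z; by_cases hz : z = y <;> simp [hz, hyT]
  calc numSubtrees H u
      = Set.ncard ({S : Set V | u ∈ S ∧ y ∉ S ∧ (G.induce S).Connected} ∪
        {S : Set V | u ∈ S ∧ y ∈ S ∧ (H.induce S).Connected}) := by
        rw [numSubtrees, numSubtreesOn, base]
    _ = _ := by
        rw [Set.ncard_union_eq hdisj (Set.toFinite _) (Set.toFinite _)]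
        congr 1
        rw [← himg, Set.ncard_image_of_injOn (fun S1 hS1 S2 hS2 h => diff_inj' hS1.2.1 hS2.2.1 h)]

private lemma count_y' {V : Type} [Finite V] {H G : SimpleGraph V} {y w : V}
    (h1 : ∀ S : Set V, y ∉ S → ((H.induce S).Connected ↔ (G.induce S).Connected))
    (hadj : H.Adj y w) (hnbr : ∀ b, H.Adj y b → b = w) :
    numSubtrees H y = 1 + Set.ncard {S : Set V | w ∈ S ∧ y ∉ S ∧ (G.induce S).Connected} := by
  have hwy : w ≠ y := fun h => H.irrefl (h ▸ hadj)
  have base : {S : Set V | {y} ⊆ S ∧ (H.induce S).Connected} =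
      insert {y} {S : Set V | y ∈ S ∧ w ∈ S ∧ (H.induce S).Connected} := by
    ext S
    simp only [Set.mem_setOf_eq, Set.mem_insert_iff, Set.singleton_subset_iff]
    constructor
    · rintro ⟨hyS, hconn⟩
      rcases (pendant_connected_iff' hadj hnbr hyS).mp hconn with hS | ⟨hwS, _⟩
      · exact Or.inl hS
      · exact Or.inr ⟨hyS, hwS, hconn⟩
    · rintro (rfl | ⟨hyS, hwS, hconn⟩)
      · exact ⟨rfl, (pendant_connected_iff' (S := {y}) hadj hnbr (Set.mem_singleton y)).mpr
          (Or.inl rfl)⟩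
      · exact ⟨hyS, hconn⟩
  have hnotmem : ({y} : Set V) ∉ {S : Set V | y ∈ S ∧ w ∈ S ∧ (H.induce S).Connected} := by
    rintro ⟨-, hwS, -⟩
    exact hwy hwS
  have himg : (fun S : Set V => S \ {y}) '' {S : Set V | y ∈ S ∧ w ∈ S ∧ (H.induce S).Connected}
      = {S : Set V | w ∈ S ∧ y ∉ S ∧ (G.induce S).Connected} := by
    ext T
    simp only [Set.mem_image, Set.mem_setOf_eq]
    constructor
    · rintro ⟨S, ⟨hyS, hwS, hconn⟩, rfl⟩
      rcases (pendant_connected_iff' hadj hnbr hyS).mp hconn with hS | ⟨-, hconn'⟩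
      · exact absurd (by rw [hS] at hwS; exact hwS) hwy
      · exact ⟨⟨hwS, hwy⟩, (by simp), (h1 _ (by simp)).mp hconn'⟩
    · rintro ⟨hwT, hyT, hconn⟩
      refine ⟨T ∪ {y}, ⟨Or.inr rfl, Or.inl hwT, ?_⟩, ?_⟩
      · rw [pendant_connected_iff' hadj hnbr (Or.inr rfl)]
        refine Or.inr ⟨Or.inl hwT, ?_⟩
        have hTe : (T ∪ {y}) \ {y} = T := by
          ext z; by_cases hz : z = y <;> simp [hz, hyT]
        rw [hTe, h1 T hyT]
        exact hconn
      · ext z; by_cases hz : z = y <;> simp [hz, hyT]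
  calc numSubtrees H y
      = Set.ncard (insert ({y} : Set V)
          {S : Set V | y ∈ S ∧ w ∈ S ∧ (H.induce S).Connected}) := by
        rw [numSubtrees, numSubtreesOn, base]
    _ = _ := by
        rw [Set.ncard_insert_of_notMem hnotmem (Set.toFinite _), ← himg,
          Set.ncard_image_of_injOn (fun S1 hS1 S2 hS2 h => diff_inj' hS1.1 hS2.1 h), add_comm]

end Helpers

/-- If `v` is in the subtree core of a tree `T` and `y` is a pendant vertex not adjacent
to `v`, then after detaching `y` and reattaching it as a pendant adjacent to `v`, the
subtree core of the new tree is exactly `{v}`. -/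
theorem subtreeCore_reattach {V : Type} [Fintype V] [DecidableEq V]
    (G : SimpleGraph V) [DecidableRel G.Adj] (hT : G.IsTree)
    (v y : V) (hv : v ∈ subtreeCore G) (hy : G.degree y = 1)
    (hne : v ≠ y) (hnadj : ¬ G.Adj v y) :
    subtreeCore (reattach G y v) = {v} := by
  classical
  have hy' : (G.neighborFinset y).card = 1 := hy
  obtain ⟨x, hx⟩ := Finset.card_eq_one.mp hy'
  have hxadj : G.Adj y x := by
    have : x ∈ G.neighborFinset y := by rw [hx]; exact Finset.mem_singleton_self x
    simpa [SimpleGraph.mem_neighborFinset] using this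
  have hnbrG : ∀ b, G.Adj y b → b = x := by
    intro b hb
    have : b ∈ G.neighborFinset y := by simpa [SimpleGraph.mem_neighborFinset] using hb
    simpa [hx] using this
  have hxy : x ≠ y := fun h => G.irrefl (h ▸ hxadj)
  have hxv : x ≠ v := fun h => hnadj (h ▸ hxadj).symm
  set H := reattach G y v with hH
  have hHadj : H.Adj y v := by
    rw [hH, reattach, SimpleGraph.fromRel_adj]
    exact ⟨Ne.symm hne, Or.inl (Or.inr ⟨rfl, rfl⟩)⟩
  have hHnbr : ∀ b, H.Adj y b → b = v := by
    intro b hb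
    rw [hH, reattach, SimpleGraph.fromRel_adj] at hb
    obtain ⟨hne', h⟩ := hb
    rcases h with (⟨-, h, -⟩ | ⟨-, h⟩) | (⟨-, -, h⟩ | ⟨h, -⟩)
    · exact absurd rfl h
    · exact h
    · exact absurd rfl h
    · exact absurd h.symm hne'
  have hind : ∀ S : Set V, y ∉ S → H.induce S = G.induce S := by
    intro S hS
    ext a b
    have hay : (a : V) ≠ y := fun h => hS (h ▸ a.2)
    have hby : (b : V) ≠ y := fun h => hS (h ▸ b.2)
    show H.Adj a b ↔ G.Adj a b
    rw [hH, reattach, SimpleGraph.fromRel_adj]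
    constructor
    · rintro ⟨hne', (⟨h, -⟩ | ⟨h, -⟩) | (⟨h, -⟩ | ⟨h, -⟩)⟩
      · exact h
      · exact absurd h hay
      · exact h.symm
      · exact absurd h hby
    · intro h
      exact ⟨h.ne, Or.inl (Or.inl ⟨h, hay, hby⟩)⟩
  have h1 : ∀ S : Set V, y ∉ S → ((H.induce S).Connected ↔ (G.induce S).Connected) :=
    fun S hS => by rw [hind S hS]
  have h1G : ∀ S : Set V, y ∉ S → ((G.induce S).Connected ↔ (G.induce S).Connected) :=
    fun S _ => Iff.rfl
  have hcG : ∀ u : V, u ≠ y → numSubtrees G u = nc1 G y u + nc2 G y u x :=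
    fun u hu => count_pendant' h1G hxadj hnbrG hu
  have hcH : ∀ u : V, u ≠ y → numSubtrees H u = nc1 G y u + nc2 G y u v :=
    fun u hu => count_pendant' h1 hHadj hHnbr hu
  have hcHy : numSubtrees H y = 1 + nc1 G y v := count_y' h1 hHadj hHnbr
  have hcore : ∀ u : V, u ≠ y → nc1 G y u + nc2 G y u x ≤ nc1 G y v + nc2 G y v x := by
    intro u hu
    have h := hv u
    rwa [hcG u hu, hcG v hne] at h
  have hvv : nc2 G y v v = nc1 G y v := by
    unfold nc1 nc2
    congr 1
    ext S
    simp only [Set.mem_setOf_eq]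
    tauto
  have hsing : ({v} : Set V) ∈ {S : Set V | v ∈ S ∧ y ∉ S ∧ (G.induce S).Connected} :=
    ⟨rfl, fun h => hne (Eq.symm h), singleton_connected' G v⟩
  have hkey : ∀ u : V, u ≠ v → u ≠ y → nc2 G y u v + nc2 G y v x < nc1 G y v + nc2 G y u x := by
    intro u huv huy
    set A := {S : Set V | u ∈ S ∧ v ∈ S ∧ y ∉ S ∧ (G.induce S).Connected} with hA
    set B := {S : Set V | v ∈ S ∧ x ∈ S ∧ y ∉ S ∧ (G.induce S).Connected} with hB
    have hsub : A ∪ B ⊂ {S : Set V | v ∈ S ∧ y ∉ S ∧ (G.induce S).Connected} := by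
      constructor
      · rintro S (⟨q1, q2, q3, q4⟩ | ⟨q1, q2, q3, q4⟩)
        · exact ⟨q2, q3, q4⟩
        · exact ⟨q1, q3, q4⟩
      · intro hcon
        rcases hcon hsing with ⟨q1, -⟩ | ⟨-, q2, -⟩
        · exact huv q1
        · exact hxv q2
    have hCap : A ∩ B ⊆ {S : Set V | u ∈ S ∧ x ∈ S ∧ y ∉ S ∧ (G.induce S).Connected} := by
      rintro S ⟨⟨q1, -, q3, q4⟩, ⟨-, q2, -, -⟩⟩
      exact ⟨q1, q2, q3, q4⟩
    have e1 : (A ∪ B).ncard + (A ∩ B).ncard = A.ncard + B.ncard :=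
      Set.ncard_union_add_ncard_inter A B (Set.toFinite _) (Set.toFinite _)
    have l1 : (A ∪ B).ncard < Set.ncard {S : Set V | v ∈ S ∧ y ∉ S ∧ (G.induce S).Connected} :=
      Set.ncard_lt_ncard hsub (Set.toFinite _)
    have l2 : (A ∩ B).ncard ≤ nc2 G y u x := Set.ncard_le_ncard hCap (Set.toFinite _)
    have e2 : nc2 G y u v = A.ncard := rfl
    have e3 : nc2 G y v x = B.ncard := rfl
    have e4 : nc1 G y v = Set.ncard {S : Set V | v ∈ S ∧ y ∉ S ∧ (G.induce S).Connected} := rfl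
    omega
  obtain ⟨p⟩ := hT.isConnected.preconnected v y
  have hzex : ∃ z, G.Adj v z ∧ z ≠ y ∧ z ≠ v := by
    cases p with
    | nil => exact absurd rfl hne
    | @cons _ c _ h q =>
      exact ⟨c, h, fun hcy => hnadj (hcy ▸ h), fun hcv => G.irrefl (hcv ▸ h)⟩
  obtain ⟨z, hvz, hzy, hzv⟩ := hzex
  have hN1v : 2 ≤ nc1 G y v := by
    refine Nat.succ_le_of_lt ?_
    show 1 < nc1 G y v
    unfold nc1
    rw [Set.one_lt_ncard (Set.toFinite _)]
    refine ⟨{v}, hsing, {v, z}, ⟨Or.inl rfl, ?_, pair_connected' hvz⟩, ?_⟩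
    · rintro (h | h)
      · exact hne h.symm
      · exact hzy h.symm
    · intro hcon
      apply hzv
      have : z ∈ ({v} : Set V) := hcon ▸ (Or.inr rfl : z ∈ ({v, z} : Set V))
      exact this
  have hmain : ∀ u : V, u ≠ v → numSubtrees H u < numSubtrees H v := by
    intro u huv
    have hv2 : numSubtrees H v = nc1 G y v + nc2 G y v v := hcH v hne
    by_cases huy : u = y
    · subst huy
      rw [hcHy, hv2, hvv]
      omega
    · rw [hcH u huy, hv2, hvv]
      have i1 := hcore u huy
      have i2 := hkey u huv huy
      omega
  ext u
  simp only [subtreeCore, Set.mem_setOf_eq, Set.mem_singleton_iff]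
  constructor
  · intro h
    by_contra huv
    exact absurd (h v) (not_le.mpr (hmain u huv))
  · intro h u'
    rw [h]
    by_cases hc : u' = v
    · rw [hc]
    · exact (hmain u' hc).le
end

section
/- In the path-star tree P_{n−g,g}, the number of subtrees containing vertex i equals i(n−g−i) + i·2^g for 1 ≤ i ≤ n−g, and equals 1 + (n−g)·2^{g−1} for each of the g pendant vertices attached to vertex n−g. -/
open SimpleGraph

/-!
Write `h` for the hub `n - g - 1`, so that the spine is `Iic h` and the pendant vertices form
`Ioi h`. Along an edge, `min v (n - g)` changes by at most one, and on the spine it is injective;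
so a walk inside a subtree `S` cannot jump over a spine vertex, and `S ∩ Iic h` is an interval.
A pendant vertex is a leaf at `h`, so if it lies in `S` together with another vertex, then `h ∈ S`.
Hence the subtrees through a spine vertex `i` are the intervals `[a, b]` with `a ≤ i ≤ b < h` and
the sets `[a, h] ∪ T` with `a ≤ i` and `T` any set of pendant vertices, which gives
`(i + 1) (h - i) + (i + 1) 2 ^ g`; those through a pendant vertex `p` are `{p}` and the sets
`[a, h] ∪ T` with `p ∈ T`, which gives `1 + (h + 1) 2 ^ (g - 1)`.
-/

namespace SimpleGraph

variable {V : Type*} {G : SimpleGraph V}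

theorem Walk.exists_mem_support_eq (f : V → ℕ) (hf : ∀ a b, G.Adj a b → f a ≤ f b + 1)
    {u v : V} (p : G.Walk u v) {c : ℕ} (hu : f u ≤ c) (hv : c ≤ f v) :
    ∃ w ∈ p.support, f w = c := by
  induction p with
  | nil => exact ⟨_, Walk.start_mem_support _, le_antisymm hu hv⟩
  | @cons a b _ hab q ih =>
    by_cases hb : f b ≤ c
    · obtain ⟨w, hw, rfl⟩ := ih hb hv
      exact ⟨w, List.mem_cons_of_mem _ hw, rfl⟩
    · exact ⟨a, List.mem_cons_self, by have := hf b a hab.symm; omega⟩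

theorem exists_mem_eq_of_preconnected_induce {S : Set V} (hS : (G.induce S).Preconnected)
    (f : V → ℕ) (hf : ∀ a b, G.Adj a b → f a ≤ f b + 1) {x y : V} (hx : x ∈ S) (hy : y ∈ S)
    {c : ℕ} (hxc : f x ≤ c) (hcy : c ≤ f y) : ∃ w ∈ S, f w = c := by
  obtain ⟨p⟩ := hS ⟨x, hx⟩ ⟨y, hy⟩
  obtain ⟨w, hw, rfl⟩ := (p.map (Embedding.induce S).toHom).exists_mem_support_eq f hf hxc hcy
  obtain ⟨w', -, rfl⟩ := List.mem_map.mp (p.support_map _ ▸ hw)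
  exact ⟨w', w'.2, rfl⟩

theorem mem_of_preconnected_induce_of_forall_adj_eq {S : Set V}
    (hS : (G.induce S).Preconnected) {p q r : V} (hp : p ∈ S) (hq : q ∈ S) (hqp : q ≠ p)
    (hr : ∀ v, G.Adj p v → v = r) : r ∈ S := by
  obtain ⟨w⟩ := hS ⟨p, hp⟩ ⟨q, hq⟩
  cases w with
  | nil => exact absurd rfl hqp
  | cons hadj _ => exact hr _ hadj ▸ Subtype.prop _

theorem connected_induce_of_exists_adj_lt {S : Set V} {r : V} (hr : r ∈ S) (f : V → ℕ)
    (hf : ∀ x ∈ S, x ≠ r → ∃ y ∈ S, G.Adj x y ∧ f y < f x) : (G.induce S).Connected := by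
  refine (connected_iff_exists_forall_reachable _).2 ⟨⟨r, hr⟩, ?_⟩
  rintro ⟨x, hx⟩
  induction hk : f x using Nat.strong_induction_on generalizing x with
  | _ k ih =>
    by_cases hxr : x = r
    · subst hxr; rfl
    obtain ⟨y, hy, hxy, hfy⟩ := hf x hx hxr
    exact (ih _ (hk ▸ hfy) y hy rfl).trans (Adj.reachable (G := G.induce S) hxy.symm)

end SimpleGraph

theorem Set.OrdConnected.exists_eq_Icc {α : Type*} [LinearOrder α] {s : Set α}
    (hs : s.OrdConnected) (hfin : s.Finite) (hne : s.Nonempty) : ∃ a b, s = Set.Icc a b := by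
  obtain ⟨a, ha, hmin⟩ := Set.exists_min_image s id hfin hne
  obtain ⟨b, hb, hmax⟩ := Set.exists_max_image s id hfin hne
  exact ⟨a, b, subset_antisymm (fun x hx => ⟨hmin x hx, hmax x hx⟩) (hs.out ha hb)⟩

theorem Set.ncard_setOf_mem_and_subset {α : Type*} {s : Set α} (hs : s.Finite) {a : α}
    (ha : a ∈ s) : {T | a ∈ T ∧ T ⊆ s}.ncard = 2 ^ (s.ncard - 1) := by
  have himage : {T | a ∈ T ∧ T ⊆ s} = insert a '' 𝒫 (s \ {a}) := by
    ext T
    refine ⟨fun ⟨haT, hTs⟩ => ⟨T \ {a}, Set.sdiff_subset_sdiff_left hTs, by simp [haT]⟩, ?_⟩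
    rintro ⟨T', hT', rfl⟩
    exact ⟨Set.mem_insert a T', Set.insert_subset ha (hT'.trans Set.sdiff_subset)⟩
  have hinj : Set.InjOn (insert a) (𝒫 (s \ {a})) := fun T₁ h₁ T₂ h₂ heq => by
    rw [← Set.insert_sdiff_self_of_notMem (fun h => (h₁ h).2 rfl),
      ← Set.insert_sdiff_self_of_notMem (fun h => (h₂ h).2 rfl), heq]
  rw [himage, hinj.ncard_image, Set.ncard_powerset _ hs.sdiff,
    Set.ncard_sdiff_singleton_of_mem ha]

theorem Set.injOn_Icc {α : Type*} [PartialOrder α] :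
    Set.InjOn (fun q : α × α => Set.Icc q.1 q.2) {q | q.1 ≤ q.2} :=
  fun _ hq _ _ heq => Prod.ext_iff.2 ((Set.Icc_eq_Icc_iff hq).1 heq)

theorem Set.injOn_Icc_union {α : Type*} [PartialOrder α] (h : α) :
    Set.InjOn (fun q : α × Set α => Set.Icc q.1 h ∪ q.2) (Set.Iic h ×ˢ 𝒫 (Set.Ioi h)) := by
  rintro ⟨a, T⟩ ⟨ha, hT⟩ ⟨a', T'⟩ ⟨ha', hT'⟩ heq
  have mem_of_le : ∀ {b U}, U ⊆ Set.Ioi h → ∀ x ≤ h, (x ∈ Set.Icc b h ∪ U ↔ b ≤ x) :=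
    fun hU x hx => ⟨fun h' => h'.elim (·.1) fun hxU => absurd hx (hU hxU).not_ge,
      fun hbx => Or.inl ⟨hbx, hx⟩⟩
  have mem_of_lt : ∀ {b U} x, h < x → (x ∈ Set.Icc b h ∪ U ↔ x ∈ U) :=
    fun x hx => ⟨fun h' => h'.elim (fun hx' => absurd hx'.2 hx.not_ge) id, Or.inr⟩
  simp only [Set.ext_iff] at heq
  have haa' : a = a' := le_antisymm
    ((mem_of_le hT a' ha').1 ((heq a').2 ((mem_of_le hT' a' ha').2 le_rfl)))
    ((mem_of_le hT' a ha).1 ((heq a).1 ((mem_of_le hT a ha).2 le_rfl)))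
  have hTT' : T = T' := Set.ext fun x =>
    ⟨fun hx => (mem_of_lt x (hT hx)).1 ((heq x).1 ((mem_of_lt x (hT hx)).2 hx)),
      fun hx => (mem_of_lt x (hT' hx)).1 ((heq x).2 ((mem_of_lt x (hT' hx)).2 hx))⟩
  rw [haa', hTT']

section PathStar

open Set

variable {n g : ℕ} {h : Fin n}

theorem pathStar_adj_iff (hh : h.val + 1 = n - g) {x y : Fin n} :
    (pathStar n g).Adj x y ↔ (x.val + 1 = y.val ∧ y ≤ h) ∨ (y.val + 1 = x.val ∧ x ≤ h) ∨
      (x = h ∧ h < y) ∨ (y = h ∧ h < x) := by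
  simp only [pathStar, fromRel_adj, ne_eq, Fin.ext_iff, Fin.le_def, Fin.lt_def]
  omega

theorem pathStar_mem_of_le_of_le (hh : h.val + 1 = n - g) {S : Set (Fin n)}
    (hS : ((pathStar n g).induce S).Preconnected) {x y z : Fin n} (hx : x ∈ S) (hy : y ∈ S)
    (hxz : x ≤ z) (hzy : z ≤ y) (hzh : z ≤ h) : z ∈ S := by
  have hf : ∀ a b, (pathStar n g).Adj a b → min a.val (n - g) ≤ min b.val (n - g) + 1 := by
    intro a b hab
    simp only [pathStar, fromRel_adj] at hab
    omega
  rw [Fin.le_def] at hxz hzy hzh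
  obtain ⟨w, hw, hwz⟩ := exists_mem_eq_of_preconnected_induce hS _ hf hx hy (c := z.val)
    (by omega) (by omega)
  rwa [show z = w from Fin.ext (by omega)]

theorem pathStar_hub_mem_of_pendant_mem (hh : h.val + 1 = n - g) {S : Set (Fin n)}
    (hS : ((pathStar n g).induce S).Preconnected) {p q : Fin n} (hp : p ∈ S) (hq : q ∈ S)
    (hqp : q ≠ p) (hhp : h < p) : h ∈ S :=
  mem_of_preconnected_induce_of_forall_adj_eq hS hp hq hqp fun v hpv => by
    simp only [pathStar_adj_iff hh, Fin.ext_iff, Fin.le_def, Fin.lt_def] at hpv hhp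
    exact Fin.ext (by omega)

theorem pathStar_connected_induce_Icc_union (hh : h.val + 1 = n - g) {a b : Fin n}
    {T : Set (Fin n)} (hab : a ≤ b) (hbh : b ≤ h) (hT : ∀ p ∈ T, h < p ∧ b = h) :
    ((pathStar n g).induce (Icc a b ∪ T)).Connected := by
  refine connected_induce_of_exists_adj_lt (Or.inl ⟨hab, le_rfl⟩)
    (fun x => x.val - b.val + (b.val - x.val)) ?_
  rintro x (⟨hax, hxb⟩ | hxT) hxb'
  · have hlt : x.val < b.val := Fin.lt_def.1 (lt_of_le_of_ne hxb hxb')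
    refine ⟨⟨x.val + 1, by omega⟩, Or.inl ⟨?_, ?_⟩, (pathStar_adj_iff hh).2 (Or.inl ⟨rfl, ?_⟩),
      ?_⟩ <;> simp only [Fin.le_def] at * <;> omega
  · obtain ⟨hhx, rfl⟩ := hT x hxT
    refine ⟨b, Or.inl ⟨hab, le_rfl⟩,
      (pathStar_adj_iff hh).2 (Or.inr (Or.inr (Or.inr ⟨rfl, hhx⟩))), ?_⟩
    rw [Fin.lt_def] at hhx
    omega

theorem pathStar_eq_Icc_union (hh : h.val + 1 = n - g) {S : Set (Fin n)}
    (hS : ((pathStar n g).induce S).Connected) {x : Fin n} (hx : x ∈ S) (hxh : x ≤ h) :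
    ∃ a b, x ∈ Icc a b ∧ b ≤ h ∧ S = Icc a b ∪ (S ∩ Ioi h) := by
  have hord : (S ∩ Iic h).OrdConnected := ⟨fun y hy z hz w hw =>
    ⟨pathStar_mem_of_le_of_le hh hS.preconnected hy.1 hz.1 hw.1 hw.2 (hw.2.trans hz.2),
      hw.2.trans hz.2⟩⟩
  obtain ⟨a, b, hab⟩ := hord.exists_eq_Icc (toFinite _) ⟨x, hx, hxh⟩
  have hxab : x ∈ Icc a b := hab ▸ ⟨hx, hxh⟩
  have hb : b ∈ S ∩ Iic h := hab ▸ ⟨hxab.1.trans hxab.2, le_rfl⟩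
  refine ⟨a, b, hxab, hb.2, ?_⟩
  rw [← hab, ← inter_union_distrib_left, Iic_union_Ioi, inter_univ]

theorem pathStar_subtrees_of_le_hub (hh : h.val + 1 = n - g) {i : Fin n} (hih : i ≤ h) :
    {S | {i} ⊆ S ∧ ((pathStar n g).induce S).Connected} =
      (fun q => Icc q.1 q.2) '' (Iic i ×ˢ Ico i h) ∪
        (fun q => Icc q.1 h ∪ q.2) '' (Iic i ×ˢ 𝒫 (Ioi h)) := by
  ext S
  constructor
  · rintro ⟨hiS, hS⟩
    rw [singleton_subset_iff] at hiS
    obtain ⟨a, b, ⟨hai, hib⟩, hbh, hSeq⟩ := pathStar_eq_Icc_union hh hS hiS hih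
    rcases hbh.lt_or_eq with hbh | hbh
    · have hpend : S ∩ Ioi h = ∅ := eq_empty_of_forall_notMem fun p ⟨hpS, hp⟩ => by
        have hhS := pathStar_mem_of_le_of_le hh hS.preconnected hiS hpS hih hp.le le_rfl
        rw [hSeq] at hhS
        rcases hhS with ⟨-, hhb⟩ | ⟨-, hhh⟩
        exacts [hbh.not_ge hhb, lt_irrefl h hhh]
      rw [hpend, union_empty] at hSeq
      exact Or.inl ⟨(a, b), ⟨hai, hib, hbh⟩, hSeq.symm⟩
    · rw [hbh] at hSeq
      exact Or.inr ⟨(a, S ∩ Ioi h), ⟨hai, inter_subset_right⟩, hSeq.symm⟩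
  · rintro (⟨⟨a, b⟩, ⟨hai, hib, hbh⟩, rfl⟩ | ⟨⟨a, T⟩, ⟨hai, hT⟩, rfl⟩)
    · refine ⟨singleton_subset_iff.2 ⟨hai, hib⟩, ?_⟩
      have hconn := pathStar_connected_induce_Icc_union hh (hai.trans hib) hbh.le (T := ∅)
        (by simp)
      rwa [union_empty] at hconn
    · exact ⟨singleton_subset_iff.2 (Or.inl ⟨hai, hih⟩),
        pathStar_connected_induce_Icc_union hh (hai.trans hih) le_rfl fun p hp => ⟨hT hp, rfl⟩⟩

theorem pathStar_subtrees_of_hub_lt (hh : h.val + 1 = n - g) {p : Fin n} (hp : h < p) :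
    {S | {p} ⊆ S ∧ ((pathStar n g).induce S).Connected} =
      insert {p} ((fun q => Icc q.1 h ∪ q.2) '' (Iic h ×ˢ {T | p ∈ T ∧ T ⊆ Ioi h})) := by
  ext S
  constructor
  · rintro ⟨hpS, hS⟩
    rw [singleton_subset_iff] at hpS
    by_cases hSp : S = {p}
    · exact Or.inl hSp
    obtain ⟨q, hqS, hqp⟩ : ∃ q ∈ S, q ≠ p := by
      by_contra! hq
      exact hSp (eq_singleton_iff_unique_mem.2 ⟨hpS, hq⟩)
    have hhS := pathStar_hub_mem_of_pendant_mem hh hS.preconnected hpS hqS hqp hp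
    obtain ⟨a, b, ⟨hah, hhb⟩, hbh, hSeq⟩ := pathStar_eq_Icc_union hh hS hhS le_rfl
    rw [le_antisymm hbh hhb] at hSeq
    exact Or.inr ⟨(a, S ∩ Ioi h), ⟨hah, ⟨hpS, hp⟩, inter_subset_right⟩, hSeq.symm⟩
  · rintro (rfl | ⟨⟨a, T⟩, ⟨hah, hpT, hT⟩, rfl⟩)
    · exact ⟨subset_rfl, by rw [induce_singleton_eq_top]; exact connected_top⟩
    · exact ⟨singleton_subset_iff.2 (Or.inr hpT),
        pathStar_connected_induce_Icc_union hh hah le_rfl fun x hx => ⟨hT hx, rfl⟩⟩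

theorem numSubtrees_pathStar_of_le_hub (hh : h.val + 1 = n - g) {i : Fin n} (hih : i ≤ h) :
    numSubtrees (pathStar n g) i = (i.val + 1) * (h.val - i.val) + (i.val + 1) * 2 ^ g := by
  have hdisj : Disjoint ((fun q => Icc q.1 q.2) '' (Iic i ×ˢ Ico i h))
      ((fun q => Icc q.1 h ∪ q.2) '' (Iic i ×ˢ 𝒫 (Ioi h))) := by
    rw [Set.disjoint_left]
    rintro _ ⟨⟨a, b⟩, ⟨-, -, hbh⟩, rfl⟩ ⟨⟨a', T⟩, ⟨ha', -⟩, heq⟩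
    have hhS : h ∈ Icc a' h ∪ T := Or.inl ⟨ha'.trans hih, le_rfl⟩
    dsimp only at heq
    rw [heq] at hhS
    exact hbh.not_ge hhS.2
  rw [numSubtrees, numSubtreesOn, pathStar_subtrees_of_le_hub hh hih, ncard_union_eq hdisj,
    (injOn_Icc.mono fun q hq => hq.1.trans hq.2.1).ncard_image,
    ((injOn_Icc_union h).mono (prod_mono (Iic_subset_Iic.2 hih) subset_rfl)).ncard_image,
    ncard_prod, ncard_prod, ncard_powerset, ← Finset.coe_Iic, ← Finset.coe_Ico, ← Finset.coe_Ioi,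
    ncard_coe_finset, ncard_coe_finset, ncard_coe_finset, Fin.card_Iic, Fin.card_Ico,
    Fin.card_Ioi]
  congr 3
  omega

theorem numSubtrees_pathStar_of_hub_lt (hh : h.val + 1 = n - g) {p : Fin n} (hp : h < p) :
    numSubtrees (pathStar n g) p = 1 + (h.val + 1) * 2 ^ (g - 1) := by
  have hp' : {p} ∉ (fun q => Icc q.1 h ∪ q.2) '' (Iic h ×ˢ {T | p ∈ T ∧ T ⊆ Ioi h}) := by
    rintro ⟨⟨a, T⟩, ⟨hah, -⟩, heq⟩
    have hhS : h ∈ Icc a h ∪ T := Or.inl ⟨hah, le_rfl⟩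
    dsimp only at heq
    rw [heq] at hhS
    exact hp.ne hhS
  rw [numSubtrees, numSubtreesOn, pathStar_subtrees_of_hub_lt hh hp, ncard_insert_of_notMem hp',
    ((injOn_Icc_union h).mono (prod_mono subset_rfl fun _ hT => hT.2)).ncard_image, ncard_prod,
    ncard_setOf_mem_and_subset (s := Ioi h) (toFinite _) hp, ← Finset.coe_Iic,
    ← Finset.coe_Ioi, ncard_coe_finset, ncard_coe_finset, Fin.card_Iic, Fin.card_Ioi, add_comm]
  congr 3
  omega

end PathStar

theorem numSubtrees_pathStar_general (n g : ℕ) (hg : g ≤ n - 3)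
    (i : Fin n) :
    (i.val < n - g → numSubtrees (pathStar n g) i
        = (i.val + 1) * (n - g - (i.val + 1)) + (i.val + 1) * 2 ^ g) ∧
    (n - g ≤ i.val → numSubtrees (pathStar n g) i = 1 + (n - g) * 2 ^ (g - 1)) := by
  have hgn : g < n := by have := i.pos; omega
  let hub : Fin n := ⟨n - g - 1, by omega⟩
  have hh : hub.val + 1 = n - g := by simp only [hub]; omega
  refine ⟨fun hi => ?_, fun hi => ?_⟩
  · rw [numSubtrees_pathStar_of_le_hub hh (Fin.le_def.2 (by simp only [hub]; omega))]
    congr 2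
    omega
  · rw [numSubtrees_pathStar_of_hub_lt hh (Fin.lt_def.2 (by simp only [hub]; omega)), hh]

/-- Subtree counts in the path-star tree `P_{n-g,g}`: the vertex with paper label `i`
(`1 ≤ i ≤ n-g`, Lean index `i - 1`) lies in `i (n-g-i) + i 2^g` subtrees, and each of the
`g` pendant vertices attached to vertex `n-g` lies in `1 + (n-g) 2^{g-1}` subtrees. -/
theorem numSubtrees_pathStar (n g : ℕ) (hn : 5 ≤ n) (hg2 : 2 ≤ g) (hg : g ≤ n - 3)
    (i : Fin n) :
    (i.val < n - g → numSubtrees (pathStar n g) i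
        = (i.val + 1) * (n - g - (i.val + 1)) + (i.val + 1) * 2 ^ g) ∧
    (n - g ≤ i.val → numSubtrees (pathStar n g) i = 1 + (n - g) * 2 ^ (g - 1)) :=
  numSubtrees_pathStar_general n g hg i
end

section
/- For the path-star tree P_{n−g,g}, the subtree core equals {n−g} if and only if 2^g + 1 > n − g. -/
open SimpleGraph

lemma pathStar_adj {n g : ℕ} {x y : Fin n} :
    (pathStar n g).Adj x y ↔ x ≠ y ∧
      ((x.val + 1 = y.val ∧ y.val < n - g) ∨ (y.val + 1 = x.val ∧ x.val < n - g) ∨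
       (x.val = n - g - 1 ∧ n - g ≤ y.val) ∨ (y.val = n - g - 1 ∧ n - g ≤ x.val)) := by
  simp only [pathStar, fromRel_adj]
  tauto

/-- Structural characterization of connected vertex subsets of `pathStar n g`. -/
def Good (n g : ℕ) (S : Set (Fin n)) : Prop :=
  S.Nonempty ∧
  (∀ x ∈ S, ∀ y ∈ S, ∀ k : Fin n, x.val ≤ k.val → k.val ≤ y.val → k.val < n - g → k ∈ S) ∧
  (∀ x ∈ S, ∀ y ∈ S, n - g ≤ x.val → x ≠ y → ∃ z ∈ S, z.val = n - g - 1)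

lemma walk_cross {n g : ℕ} {S : Set (Fin n)} {u v : ↥S}
    (w : ((pathStar n g).induce S).Walk u v) {k : ℕ} (hk : k < n - g)
    (h1 : (u : Fin n).val < k) (h2 : k ≤ (v : Fin n).val) :
    ∃ z ∈ w.support, (z : Fin n).val = k := by
  induction w with
  | nil => omega
  | @cons a b c h p ih =>
    by_cases hc : k ≤ (b : Fin n).val
    · have hadj : (pathStar n g).Adj (a : Fin n) (b : Fin n) := h
      rw [pathStar_adj] at hadj
      obtain ⟨-, hadj⟩ := hadj
      refine ⟨b, by simp [Walk.support_cons], ?_⟩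
      clear ih p h
      rcases hadj with ⟨h1', h2'⟩ | ⟨h1', h2'⟩ | ⟨h1', h2'⟩ | ⟨h1', h2'⟩ <;> omega
    · obtain ⟨z, hz, hzv⟩ := ih (by omega) h2
      exact ⟨z, by simp [Walk.support_cons]; right; exact hz, hzv⟩

lemma walk_leaf {n g : ℕ} (h1g : 1 ≤ n - g) {S : Set (Fin n)} {u v : ↥S}
    (w : ((pathStar n g).induce S).Walk u v) (hu : n - g ≤ (u : Fin n).val) (huv : u ≠ v) :
    ∃ z ∈ w.support, (z : Fin n).val = n - g - 1 := by
  cases w with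
  | nil => exact absurd rfl huv
  | @cons _ b _ h p =>
    have hadj : (pathStar n g).Adj (u : Fin n) (b : Fin n) := h
    rw [pathStar_adj] at hadj
    obtain ⟨-, hadj⟩ := hadj
    refine ⟨b, by simp [Walk.support_cons], ?_⟩
    clear p h huv
    rcases hadj with ⟨h1', h2'⟩ | ⟨h1', h2'⟩ | ⟨h1', h2'⟩ | ⟨h1', h2'⟩ <;> omega

lemma reach_seg {n g : ℕ} {S : Set (Fin n)} : ∀ (d : ℕ) (x y : ↥S),
    (x : Fin n).val + d = (y : Fin n).val → (y : Fin n).val < n - g →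
    (∀ k : Fin n, (x : Fin n).val ≤ k.val → k.val ≤ (y : Fin n).val → k ∈ S) →
    ((pathStar n g).induce S).Reachable x y := by
  intro d
  induction d with
  | zero =>
    intro x y h _ _
    have : x = y := Subtype.ext (Fin.ext (by omega))
    rw [this]
  | succ d ih =>
    intro x y h hy hall
    have hx1n : (x : Fin n).val + 1 < n := by
      have := (y : Fin n).isLt; omega
    have hkge : (x : Fin n).val ≤ (⟨(x : Fin n).val + 1, hx1n⟩ : Fin n).val := by
      show (x : Fin n).val ≤ (x : Fin n).val + 1; omega
    have hkle : (⟨(x : Fin n).val + 1, hx1n⟩ : Fin n).val ≤ (y : Fin n).val := by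
      show (x : Fin n).val + 1 ≤ (y : Fin n).val; omega
    have hx'S : (⟨(x : Fin n).val + 1, hx1n⟩ : Fin n) ∈ S := hall _ hkge hkle
    have hadj : ((pathStar n g).induce S).Adj x ⟨⟨(x : Fin n).val + 1, hx1n⟩, hx'S⟩ := by
      show (pathStar n g).Adj (x : Fin n) ⟨(x : Fin n).val + 1, hx1n⟩
      rw [pathStar_adj]
      refine ⟨?_, Or.inl ⟨rfl, by omega⟩⟩
      intro hEq
      have h2 := congrArg Fin.val hEq
      have h3 : (x : Fin n).val = (x : Fin n).val + 1 := h2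
      omega
    refine hadj.reachable.trans
      (ih ⟨⟨(x : Fin n).val + 1, hx1n⟩, hx'S⟩ y (by show (x : Fin n).val + 1 + d = _; omega) hy ?_)
    intro k hk1 hk2
    have hk1' : (x : Fin n).val + 1 ≤ k.val := hk1
    exact hall k (by omega) hk2

lemma good_connected {n g : ℕ} (h1g : 1 ≤ n - g) {S : Set (Fin n)} (hS : Good n g S) :
    ((pathStar n g).induce S).Connected := by
  rw [connected_iff]
  obtain ⟨⟨w0, hw0⟩, hcl, hleaf⟩ := hS
  refine ⟨?_, ⟨⟨w0, hw0⟩⟩⟩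
  have key : ∀ x y : ↥S, (x : Fin n).val ≤ (y : Fin n).val → (y : Fin n).val < n - g →
      ((pathStar n g).induce S).Reachable x y := by
    intro x y hxy hy
    exact reach_seg ((y : Fin n).val - (x : Fin n).val) x y (by omega) hy
      (fun k hk1 hk2 => hcl ↑x x.2 ↑y y.2 k hk1 hk2 (by omega))
  have path_reach : ∀ x y : ↥S, (x : Fin n).val < n - g → (y : Fin n).val < n - g →
      ((pathStar n g).induce S).Reachable x y := by
    intro x y hx hy
    rcases le_total (x : Fin n).val (y : Fin n).val with h | h
    · exact key x y h hy
    · exact (key y x h hx).symm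
  have adj_leaf_c : ∀ x z : ↥S, n - g ≤ (x : Fin n).val → (z : Fin n).val = n - g - 1 →
      ((pathStar n g).induce S).Adj z x := by
    intro x z hx hz
    show (pathStar n g).Adj (z : Fin n) (x : Fin n)
    rw [pathStar_adj]
    refine ⟨?_, Or.inr (Or.inr (Or.inl ⟨hz, hx⟩))⟩
    intro hEq
    have := congrArg Fin.val hEq
    omega
  intro u v
  by_cases huv : u = v
  · rw [huv]
  rcases lt_or_ge (u : Fin n).val (n - g) with hu | hu <;>
    rcases lt_or_ge (v : Fin n).val (n - g) with hv | hv
  · exact path_reach u v hu hv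
  · obtain ⟨z, hzS, hzval⟩ := hleaf ↑v v.2 ↑u u.2 hv (Subtype.coe_ne_coe.mpr (Ne.symm huv))
    exact (path_reach u ⟨z, hzS⟩ hu (show z.val < n - g by omega)).trans (adj_leaf_c v ⟨z, hzS⟩ hv hzval).reachable
  · obtain ⟨z, hzS, hzval⟩ := hleaf ↑u u.2 ↑v v.2 hu (Subtype.coe_ne_coe.mpr huv)
    exact ((adj_leaf_c u ⟨z, hzS⟩ hu hzval).reachable.symm).trans
      (path_reach ⟨z, hzS⟩ v (show z.val < n - g by omega) hv)
  · obtain ⟨z, hzS, hzval⟩ := hleaf ↑u u.2 ↑v v.2 hu (Subtype.coe_ne_coe.mpr huv)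
    exact ((adj_leaf_c u ⟨z, hzS⟩ hu hzval).reachable.symm).trans
      (adj_leaf_c v ⟨z, hzS⟩ hv hzval).reachable

lemma connected_good {n g : ℕ} (h1g : 1 ≤ n - g) {S : Set (Fin n)}
    (hC : ((pathStar n g).induce S).Connected) : Good n g S := by
  refine ⟨?_, ?_, ?_⟩
  · obtain ⟨⟨x, hx⟩⟩ := hC.nonempty
    exact ⟨x, hx⟩
  · intro x hx y hy k hk1 hk2 hkm
    rcases Nat.eq_or_lt_of_le hk1 with he | hlt
    · rw [show k = x from Fin.ext he.symm]; exact hx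
    · obtain ⟨w⟩ := hC.preconnected ⟨x, hx⟩ ⟨y, hy⟩
      obtain ⟨z, _, hzv⟩ := walk_cross w hkm hlt hk2
      rw [show k = ↑z from Fin.ext hzv.symm]
      exact z.2
  · intro x hx y hy hxv hxy
    obtain ⟨w⟩ := hC.preconnected ⟨x, hx⟩ ⟨y, hy⟩
    obtain ⟨z, _, hzv⟩ := walk_leaf h1g w hxv (fun h => hxy (congrArg Subtype.val h))
    exact ⟨z, z.2, hzv⟩

lemma connected_iff_good {n g : ℕ} (h1g : 1 ≤ n - g) {S : Set (Fin n)} :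
    ((pathStar n g).induce S).Connected ↔ Good n g S :=
  ⟨connected_good h1g, good_connected h1g⟩

def ivl (n : ℕ) (a b : ℕ) : Set (Fin n) := {x | a ≤ x.val ∧ x.val ≤ b}

def Phi (n : ℕ) (p : ℕ × ℕ × Set (Fin n)) : Set (Fin n) := ivl n p.1 p.2.1 ∪ p.2.2

def Leaves (n g : ℕ) : Set (Fin n) := {x | n - g ≤ x.val}

def Idx (n g i : ℕ) : Set (ℕ × ℕ × Set (Fin n)) :=
  {p | p.1 ≤ i ∧ i ≤ p.2.1 ∧ p.2.1 < n - g ∧ p.2.2 ⊆ Leaves n g ∧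
    (p.2.2.Nonempty → p.2.1 = n - g - 1)}

lemma mem_Phi {n a b : ℕ} {L : Set (Fin n)} {x : Fin n} :
    x ∈ Phi n (a, b, L) ↔ (a ≤ x.val ∧ x.val ≤ b) ∨ x ∈ L := Iff.rfl

lemma mem_Idx {n g i a b : ℕ} {L : Set (Fin n)} :
    (a, b, L) ∈ Idx n g i ↔ a ≤ i ∧ i ≤ b ∧ b < n - g ∧ L ⊆ Leaves n g ∧
      (L.Nonempty → b = n - g - 1) := Iff.rfl

lemma phi_mem_good {n g i : ℕ} (h1g : 1 ≤ n - g) {p : ℕ × ℕ × Set (Fin n)}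
    (hp : p ∈ Idx n g i) (hin : i < n) :
    (⟨i, hin⟩ : Fin n) ∈ Phi n p ∧ Good n g (Phi n p) := by
  obtain ⟨a, b, L⟩ := p
  rw [mem_Idx] at hp
  obtain ⟨ha, hb1, hb2, hL, hLb⟩ := hp
  have hvmem : (⟨i, hin⟩ : Fin n) ∈ Phi n (a, b, L) :=
    mem_Phi.mpr (Or.inl ⟨ha, hb1⟩)
  refine ⟨hvmem, ⟨⟨i, hin⟩, hvmem⟩, ?_, ?_⟩
  · intro x hx y hy k hk1 hk2 hkm
    rw [mem_Phi] at hx hy ⊢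
    left
    constructor
    · rcases hx with hx | hx
      · exact le_trans hx.1 hk1
      · exfalso; have := hL hx; simp only [Leaves, Set.mem_setOf_eq] at this; omega
    · rcases hy with hy | hy
      · exact le_trans hk2 hy.2
      · have hbv := hLb ⟨y, hy⟩; omega
  · intro x hx y hy hxv hxy
    rw [mem_Phi] at hx
    have hxL : x ∈ L := by
      rcases hx with hx | hx
      · exfalso; obtain ⟨hx1, hx2⟩ := hx; omega
      · exact hx
    have hbv : b = n - g - 1 := hLb ⟨x, hxL⟩
    exact ⟨⟨n - g - 1, by omega⟩, mem_Phi.mpr (Or.inl ⟨by show a ≤ n - g - 1; omega,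
      by show n - g - 1 ≤ b; omega⟩), rfl⟩

lemma phi_inj {n g i : ℕ} (hi : i < n - g) (hgn : n - g ≤ n) :
    Set.InjOn (Phi n) (Idx n g i) := by
  intro p hp q hq hpq
  obtain ⟨a, b, L⟩ := p
  obtain ⟨a', b', L'⟩ := q
  rw [mem_Idx] at hp hq
  obtain ⟨ha, hb1, hb2, hL, hLb⟩ := hp
  obtain ⟨ha', hb1', hb2', hL', hLb'⟩ := hq
  have hlow : ∀ x : Fin n, (a ≤ x.val ∧ x.val ≤ b) ↔ (a' ≤ x.val ∧ x.val ≤ b') := by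
    intro x
    constructor
    · intro hx
      have hx2 : x ∈ Phi n (a', b', L') := hpq ▸ mem_Phi.mpr (Or.inl hx)
      rcases mem_Phi.mp hx2 with h | h
      · exact h
      · exfalso; have := hL' h; simp only [Leaves, Set.mem_setOf_eq] at this
        obtain ⟨h1, h2⟩ := hx; omega
    · intro hx
      have hx2 : x ∈ Phi n (a, b, L) := hpq ▸ mem_Phi.mpr (Or.inl hx)
      rcases mem_Phi.mp hx2 with h | h
      · exact h
      · exfalso; have := hL h; simp only [Leaves, Set.mem_setOf_eq] at this
        obtain ⟨h1, h2⟩ := hx; omega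
  have haa : a = a' ∧ b = b' := by
    have h1 := (hlow ⟨a, by omega⟩).mp ⟨by show a ≤ a; omega, by show a ≤ b; omega⟩
    have h2 := (hlow ⟨b, by omega⟩).mp ⟨by show a ≤ b; omega, by show b ≤ b; omega⟩
    have h3 := (hlow ⟨a', by omega⟩).mpr ⟨by show a' ≤ a'; omega, by show a' ≤ b'; omega⟩
    have h4 := (hlow ⟨b', by omega⟩).mpr ⟨by show a' ≤ b'; omega, by show b' ≤ b'; omega⟩
    have h1a : a' ≤ a := h1.1
    have h3a : a ≤ a' := h3.1
    have h2b : b ≤ b' := h2.2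
    have h4b : b' ≤ b := h4.2
    omega
  have hLL : L = L' := by
    ext x
    constructor
    · intro hx
      have hx2 : x ∈ Phi n (a', b', L') := hpq ▸ mem_Phi.mpr (Or.inr hx)
      rcases mem_Phi.mp hx2 with h | h
      · exfalso; have := hL hx; simp only [Leaves, Set.mem_setOf_eq] at this
        obtain ⟨h1, h2⟩ := h; omega
      · exact h
    · intro hx
      have hx2 : x ∈ Phi n (a, b, L) := hpq ▸ mem_Phi.mpr (Or.inr hx)
      rcases mem_Phi.mp hx2 with h | h
      · exfalso; have := hL' hx; simp only [Leaves, Set.mem_setOf_eq] at this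
        obtain ⟨h1, h2⟩ := h; omega
      · exact h
  exact Prod.ext haa.1 (Prod.ext haa.2 hLL)

lemma Sv_eq_image {n g i : ℕ} (h3 : 3 ≤ n - g) (hi : i < n - g) (hin : i < n) :
    {S : Set (Fin n) | (⟨i, hin⟩ : Fin n) ∈ S ∧ Good n g S} = Phi n '' Idx n g i := by
  apply Set.Subset.antisymm
  · intro S hS
    obtain ⟨hv, hne, hcl, hleaf⟩ := hS
    have hPfin : ({x | x ∈ S ∧ x.val < n - g} : Set (Fin n)).Finite := Set.toFinite _
    have hvP : (⟨i, hin⟩ : Fin n) ∈ hPfin.toFinset := by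
      rw [Set.Finite.mem_toFinset]; exact ⟨hv, hi⟩
    have hFne : hPfin.toFinset.Nonempty := ⟨_, hvP⟩
    set amin := hPfin.toFinset.min' hFne with hamin_def
    set bmax := hPfin.toFinset.max' hFne with hbmax_def
    have hamin : amin ∈ S ∧ amin.val < n - g := by
      have := Finset.min'_mem hPfin.toFinset hFne
      rwa [Set.Finite.mem_toFinset] at this
    have hbmax : bmax ∈ S ∧ bmax.val < n - g := by
      have := Finset.max'_mem hPfin.toFinset hFne
      rwa [Set.Finite.mem_toFinset] at this
    have hale : amin.val ≤ i := Fin.le_def.mp (Finset.min'_le _ _ hvP)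
    have hble : i ≤ bmax.val := Fin.le_def.mp (Finset.le_max' _ _ hvP)
    have hLcond : (S ∩ Leaves n g).Nonempty → bmax.val = n - g - 1 := by
      rintro ⟨ℓ, hℓS, hℓL⟩
      simp only [Leaves, Set.mem_setOf_eq] at hℓL
      have hne2 : ℓ ≠ (⟨i, hin⟩ : Fin n) := by
        intro hEq; have := congrArg Fin.val hEq; simp at this; omega
      obtain ⟨z, hzS, hzv⟩ := hleaf ℓ hℓS ⟨i, hin⟩ hv hℓL hne2
      have hzP : z ∈ hPfin.toFinset := by
        rw [Set.Finite.mem_toFinset]; exact ⟨hzS, by omega⟩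
      have := Fin.le_def.mp (Finset.le_max' _ _ hzP)
      omega
    refine ⟨(amin.val, bmax.val, S ∩ Leaves n g), mem_Idx.mpr
      ⟨hale, hble, hbmax.2, Set.inter_subset_right, hLcond⟩, ?_⟩
    ext x
    rw [mem_Phi]
    constructor
    · rintro (⟨hx1, hx2⟩ | hx)
      · exact hcl amin hamin.1 bmax hbmax.1 x hx1 hx2 (by omega)
      · exact hx.1
    · intro hxS
      by_cases hxm : x.val < n - g
      · left
        have hxP : x ∈ hPfin.toFinset := by
          rw [Set.Finite.mem_toFinset]; exact ⟨hxS, hxm⟩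
        exact ⟨Fin.le_def.mp (Finset.min'_le _ _ hxP), Fin.le_def.mp (Finset.le_max' _ _ hxP)⟩
      · right
        exact ⟨hxS, by simp only [Leaves, Set.mem_setOf_eq]; omega⟩
  · rintro S ⟨p, hp, rfl⟩
    exact phi_mem_good (by omega) hp hin

lemma ncard_sprod {α β : Type*} (A : Set α) (B : Set β) :
    (A ×ˢ B).ncard = A.ncard * B.ncard := by
  rw [← Nat.card_coe_set_eq, ← Nat.card_coe_set_eq, ← Nat.card_coe_set_eq,
    Nat.card_congr (Equiv.Set.prod A B), Nat.card_prod]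

lemma ncard_powerset {α : Type*} [Fintype α] [DecidableEq α] (A : Set α) :
    {L : Set α | L ⊆ A}.ncard = 2 ^ A.ncard := by
  classical
  have himg : {L : Set α | L ⊆ A} = (fun s : Finset α => (↑s : Set α)) '' ↑A.toFinset.powerset := by
    ext L
    simp only [Set.mem_setOf_eq, Set.mem_image, Finset.mem_coe, Finset.mem_powerset]
    constructor
    · intro hL
      refine ⟨L.toFinset, ?_, by simp⟩
      intro x hx
      simp only [Set.mem_toFinset] at hx ⊢
      exact hL hx
    · rintro ⟨s, hs, rfl⟩
      intro x hx
      simp only [Finset.mem_coe] at hx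
      have := hs hx
      simpa using this
  rw [himg, Set.ncard_image_of_injective _ Finset.coe_injective, Set.ncard_coe_finset,
    Finset.card_powerset, Set.ncard_eq_toFinset_card']

lemma ncard_Leaves {n g : ℕ} (hgn : g ≤ n) : (Leaves n g).ncard = g := by
  have : Leaves n g = (fun t : Fin g => (⟨n - g + t.val, by omega⟩ : Fin n)) '' Set.univ := by
    ext x
    simp only [Leaves, Set.mem_setOf_eq, Set.image_univ, Set.mem_range]
    constructor
    · intro hx
      have hxn := x.isLt
      refine ⟨⟨x.val - (n - g), by omega⟩, ?_⟩
      apply Fin.ext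
      show n - g + (x.val - (n - g)) = x.val
      omega
    · rintro ⟨t, rfl⟩
      show n - g ≤ n - g + t.val
      omega
  rw [this, Set.image_univ, ← Set.image_univ, Set.ncard_image_of_injOn, Set.ncard_univ,
    Nat.card_eq_fintype_card, Fintype.card_fin]
  intro s _ t _ hst
  have := congrArg Fin.val hst
  simp only at this
  exact Fin.ext (by omega)

lemma ncard_Idx {n g i : ℕ} (h3 : 3 ≤ n - g) (hgn : g ≤ n) (hi : i < n - g) :
    (Idx n g i).ncard = (i + 1) * ((n - g - 1 - i) + 2 ^ g) := by
  have hEq : Idx n g i = (Set.Iic i) ×ˢ ((Set.Icc i (n - g - 2) ×ˢ {(∅ : Set (Fin n))}) ∪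
      ({n - g - 1} ×ˢ {L : Set (Fin n) | L ⊆ Leaves n g})) := by
    ext ⟨a, b, L⟩
    rw [mem_Idx]
    simp only [Set.mem_prod, Set.mem_union, Set.mem_Iic, Set.mem_Icc, Set.mem_singleton_iff,
      Set.mem_setOf_eq]
    constructor
    · rintro ⟨h1, h2, h3', h4, h5⟩
      refine ⟨h1, ?_⟩
      by_cases hb : b = n - g - 1
      · right; exact ⟨hb, h4⟩
      · left
        refine ⟨⟨h2, by omega⟩, ?_⟩
        by_contra hL
        rw [← Ne, ← Set.nonempty_iff_ne_empty] at hL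
        exact hb (h5 hL)
    · rintro ⟨h1, ⟨⟨hb1, hb2⟩, hL⟩ | ⟨hb, hL⟩⟩
      · subst hL
        exact ⟨h1, hb1, by omega, by simp, fun h => absurd h (by simp)⟩
      · subst hb
        exact ⟨h1, by omega, by omega, hL, fun _ => rfl⟩
  have hdisj : Disjoint (Set.Icc i (n - g - 2) ×ˢ {(∅ : Set (Fin n))})
      ({n - g - 1} ×ˢ {L : Set (Fin n) | L ⊆ Leaves n g}) := by
    rw [Set.disjoint_left]
    rintro ⟨b, L⟩ ⟨hb, -⟩ ⟨hb', -⟩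
    simp only [Set.mem_Icc] at hb
    simp only [Set.mem_singleton_iff] at hb'
    omega
  rw [hEq, ncard_sprod, Set.ncard_union_eq hdisj
    ((Set.finite_Icc _ _).prod (Set.finite_singleton _))
    ((Set.finite_singleton _).prod (Set.toFinite _)),
    ncard_sprod, ncard_sprod, ncard_powerset, ncard_Leaves hgn,
    ← Finset.coe_Iic, Set.ncard_coe_finset, Nat.card_Iic,
    ← Finset.coe_Icc, Set.ncard_coe_finset, Nat.card_Icc,
    Set.ncard_singleton, Set.ncard_singleton]
  have h1 : n - g - 2 + 1 - i = n - g - 1 - i := by omega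
  rw [h1]
  ring

lemma numSubtrees_path {n g i : ℕ} (h3 : 3 ≤ n - g) (hgn : g ≤ n) (hi : i < n - g)
    (hin : i < n) :
    numSubtrees (pathStar n g) ⟨i, hin⟩ = (i + 1) * ((n - g - 1 - i) + 2 ^ g) := by
  unfold numSubtrees numSubtreesOn
  have hset : {S : Set (Fin n) | {(⟨i, hin⟩ : Fin n)} ⊆ S ∧ ((pathStar n g).induce S).Connected}
      = {S : Set (Fin n) | (⟨i, hin⟩ : Fin n) ∈ S ∧ Good n g S} := by
    ext S
    rw [Set.mem_setOf_eq, Set.mem_setOf_eq, Set.singleton_subset_iff,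
      connected_iff_good (by omega : 1 ≤ n - g)]
  rw [hset, Sv_eq_image h3 hi hin, Set.ncard_image_of_injOn (phi_inj hi (by omega)),
    ncard_Idx h3 hgn hi]

lemma numSubtrees_eq_good {n g : ℕ} (h1g : 1 ≤ n - g) (v : Fin n) :
    numSubtrees (pathStar n g) v = {S : Set (Fin n) | v ∈ S ∧ Good n g S}.ncard := by
  unfold numSubtrees numSubtreesOn
  congr 1
  ext S
  rw [Set.mem_setOf_eq, Set.mem_setOf_eq, Set.singleton_subset_iff, connected_iff_good h1g]

lemma numSubtrees_leaf_lt {n g : ℕ} (h3 : 3 ≤ n - g) (hgn : g ≤ n) {l : Fin n}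
    (hl : n - g ≤ l.val) (hcn : n - g - 1 < n) :
    numSubtrees (pathStar n g) l < numSubtrees (pathStar n g) ⟨n - g - 1, hcn⟩ := by
  set c : Fin n := ⟨n - g - 1, hcn⟩ with hcdef
  rw [numSubtrees_eq_good (by omega) l, numSubtrees_eq_good (by omega) c]
  set Sl := {S : Set (Fin n) | l ∈ S ∧ Good n g S} with hSl
  set Sc := {S : Set (Fin n) | c ∈ S ∧ Good n g S} with hSc
  classical
  set F : Set (Fin n) → Set (Fin n) := fun S => if S = {l} then {c} else S with hF
  have hgoodc : Good n g ({c} : Set (Fin n)) := by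
    refine ⟨⟨c, rfl⟩, ?_, ?_⟩
    · intro x hx y hy k hk1 hk2 hkm
      rw [Set.mem_singleton_iff] at hx hy ⊢
      subst hx; subst hy
      apply Fin.ext
      show k.val = n - g - 1
      have hx1 : n - g - 1 ≤ k.val := hk1
      have hx2 : k.val ≤ n - g - 1 := hk2
      omega
    · intro x hx y hy hxv hxy
      rw [Set.mem_singleton_iff] at hx
      subst hx
      have : (c : Fin n).val = n - g - 1 := rfl
      omega
  have hmap : ∀ S ∈ Sl, F S ∈ Sc := by
    intro S hS
    obtain ⟨hlS, hGood⟩ := hS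
    by_cases hSeq : S = {l}
    · simp only [hF, if_pos hSeq]
      exact ⟨rfl, hgoodc⟩
    · simp only [hF, if_neg hSeq]
      refine ⟨?_, hGood⟩
      -- S ≠ {l} and l ∈ S gives some other element
      have hex : ∃ y ∈ S, y ≠ l := by
        by_contra hco
        push_neg at hco
        exact hSeq (Set.eq_singleton_iff_unique_mem.mpr ⟨hlS, hco⟩)
      obtain ⟨y, hyS, hyl⟩ := hex
      obtain ⟨z, hzS, hzv⟩ := hGood.2.2 l hlS y hyS hl (Ne.symm hyl)
      have : z = c := Fin.ext hzv
      rwa [this] at hzS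
  have hinj : Set.InjOn F Sl := by
    intro S hS T hT hFST
    by_cases h1 : S = {l} <;> by_cases h2 : T = {l}
    · rw [h1, h2]
    · exfalso
      rw [hF] at hFST
      simp only [if_pos h1, if_neg h2] at hFST
      have hlT : l ∈ T := hT.1
      rw [← hFST, Set.mem_singleton_iff] at hlT
      have := congrArg Fin.val hlT
      have hcv : (c : Fin n).val = n - g - 1 := rfl
      omega
    · exfalso
      rw [hF] at hFST
      simp only [if_neg h1, if_pos h2] at hFST
      have hlS : l ∈ S := hS.1
      rw [hFST, Set.mem_singleton_iff] at hlS
      have := congrArg Fin.val hlS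
      have hcv : (c : Fin n).val = n - g - 1 := rfl
      omega
    · rw [hF] at hFST
      simpa only [if_neg h1, if_neg h2] using hFST
  have himg : F '' Sl ⊂ Sc := by
    constructor
    · rintro T ⟨S, hS, rfl⟩
      exact hmap S hS
    · intro hsub
      -- witness
      set w : Set (Fin n) := {x | n - g - 2 ≤ x.val ∧ x.val ≤ n - g - 1} with hw
      have hcw : c ∈ w := ⟨by show n - g - 2 ≤ n - g - 1; omega, by show n - g - 1 ≤ n - g - 1; omega⟩
      have hwSc : w ∈ Sc := by
        refine ⟨hcw, ⟨c, hcw⟩, ?_, ?_⟩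
        · intro x hx y hy k hk1 hk2 hkm
          exact ⟨le_trans hx.1 hk1, le_trans hk2 hy.2⟩
        · intro x hx y hy hxv hxy
          have := hx.2
          omega
      have := hsub hwSc
      obtain ⟨S, hSSl, hFS⟩ := this
      by_cases h1 : S = {l}
      · rw [hF] at hFS
        simp only [if_pos h1] at hFS
        have hx0 : (⟨n - g - 2, by omega⟩ : Fin n) ∈ w :=
          ⟨by show n - g - 2 ≤ n - g - 2; omega, by show n - g - 2 ≤ n - g - 1; omega⟩
        rw [← hFS, Set.mem_singleton_iff] at hx0
        have := congrArg Fin.val hx0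
        have hcv : (c : Fin n).val = n - g - 1 := rfl
        have hxv : (⟨n - g - 2, by omega⟩ : Fin n).val = n - g - 2 := rfl
        omega
      · rw [hF] at hFS
        simp only [if_neg h1] at hFS
        have hlS : l ∈ S := hSSl.1
        rw [hFS] at hlS
        have h2 := hlS.2
        omega
  calc Sl.ncard = (F '' Sl).ncard := (Set.ncard_image_of_injOn hinj).symm
    _ < Sc.ncard := Set.ncard_lt_ncard himg (Set.toFinite _)

/-- The subtree core of `P_{n-g,g}` is `{n-g}` (paper label; Lean index `n-g-1`) if and
only if `2^g + 1 > n - g`. -/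
theorem subtreeCore_pathStar_iff (n g : ℕ) (hn : 5 ≤ n) (hg2 : 2 ≤ g) (hg : g ≤ n - 3) :
    subtreeCore (pathStar n g) = {(⟨n - g - 1, by omega⟩ : Fin n)} ↔ n - g < 2 ^ g + 1 := by
  have h3 : 3 ≤ n - g := by omega
  have hgn : g ≤ n := by omega
  have hcn : n - g - 1 < n := by omega
  set c : Fin n := ⟨n - g - 1, by omega⟩ with hcdef
  have hg1 : 1 ≤ 2 ^ g := Nat.one_le_two_pow
  have hfc : numSubtrees (pathStar n g) c = (n - g) * 2 ^ g := by
    have h := numSubtrees_path (i := n - g - 1) h3 hgn (by omega) (by omega)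
    have hc2 : (⟨n - g - 1, by omega⟩ : Fin n) = c := rfl
    rw [hc2] at h
    rw [h]
    have e1 : n - g - 1 - (n - g - 1) = 0 := by omega
    have e2 : n - g - 1 + 1 = n - g := by omega
    rw [e1, e2, zero_add]
  have key : ∀ u : Fin n, u ≠ c → n - g ≤ 2 ^ g →
      numSubtrees (pathStar n g) u < numSubtrees (pathStar n g) c := by
    intro u hu hle
    rcases lt_or_ge u.val (n - g) with hup | hul
    · have hfu := numSubtrees_path (i := u.val) h3 hgn hup u.isLt
      rw [Fin.eta] at hfu
      rw [hfu, hfc]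
      have hui : u.val ≤ n - g - 2 := by
        have : u.val ≠ n - g - 1 := fun h => hu (Fin.ext h)
        omega
      obtain ⟨s, hs1, hs2⟩ : ∃ s, n - g - 1 - u.val = s ∧ u.val + 1 + s = n - g :=
        ⟨n - g - 1 - u.val, rfl, by omega⟩
      rw [hs1, ← hs2]
      have h1 : u.val + 1 < 2 ^ g := by omega
      have h2 : 1 ≤ s := by omega
      calc (u.val + 1) * (s + 2 ^ g) = (u.val + 1) * s + (u.val + 1) * 2 ^ g := by ring
        _ < s * 2 ^ g + (u.val + 1) * 2 ^ g := by
            have : (u.val + 1) * s < s * 2 ^ g := by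
              calc (u.val + 1) * s = s * (u.val + 1) := mul_comm _ _
                _ < s * 2 ^ g := by
                    exact Nat.mul_lt_mul_of_le_of_lt (le_refl s) h1 (by omega)
            omega
        _ = (u.val + 1 + s) * 2 ^ g := by ring
    · exact numSubtrees_leaf_lt h3 hgn hul hcn
  constructor
  · intro hCore
    have hcmem : ∀ u, numSubtrees (pathStar n g) u ≤ numSubtrees (pathStar n g) c := by
      have : c ∈ subtreeCore (pathStar n g) := by rw [hCore]; rfl
      exact this
    have hm2 : (⟨n - g - 2, by omega⟩ : Fin n) ∉ subtreeCore (pathStar n g) := by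
      rw [hCore]
      intro hmem
      rw [Set.mem_singleton_iff] at hmem
      have h := congrArg Fin.val hmem
      have e1 : (⟨n - g - 2, by omega⟩ : Fin n).val = n - g - 2 := rfl
      have e2 : (c : Fin n).val = n - g - 1 := rfl
      omega
    simp only [subtreeCore, Set.mem_setOf_eq, not_forall, not_le] at hm2
    obtain ⟨u, hu⟩ := hm2
    have h1 : numSubtrees (pathStar n g) ⟨n - g - 2, by omega⟩ < numSubtrees (pathStar n g) c :=
      lt_of_lt_of_le hu (hcmem u)
    rw [numSubtrees_path (i := n - g - 2) h3 hgn (by omega) (by omega), hfc] at h1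
    have e1 : n - g - 2 + 1 = n - g - 1 := by omega
    have e2 : n - g - 1 - (n - g - 2) = 1 := by omega
    rw [e1, e2] at h1
    by_contra hcon
    push_neg at hcon
    obtain ⟨M1, hM1⟩ : ∃ M1, n - g = M1 + 1 := ⟨n - g - 1, by omega⟩
    rw [hM1] at h1 hcon
    have e3 : M1 + 1 - 1 = M1 := by omega
    rw [e3] at h1
    have h4 : M1 * (1 + 2 ^ g) = M1 + M1 * 2 ^ g := by ring
    have h5 : (M1 + 1) * 2 ^ g = M1 * 2 ^ g + 2 ^ g := by ring
    rw [h4, h5] at h1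
    omega
  · intro hlt
    have hle : n - g ≤ 2 ^ g := by omega
    ext u
    simp only [subtreeCore, Set.mem_setOf_eq, Set.mem_singleton_iff]
    constructor
    · intro hall
      by_contra hne
      exact absurd (hall c) (not_le.mpr (key u hne hle))
    · rintro rfl
      intro w
      rcases eq_or_ne w c with rfl | hw
      · exact le_refl _
      · exact (key w hw hle).le
end
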